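/- arXiv:2505.09045 — 6 statements merged into one kernel-verified Lean document; each statement's English description precedes it below -/
import Mathlib

section
/- Let g : ℝ^d → ℝ be continuously differentiable with ‖∇g(y)‖ ≤ 46·√(r+1) for every y ∈ ℝ^d. Let x ∈ ℝ^d and set y = ρ(x). If there exists a unit vector u ∈ ℝ^d with |⟨u, y⟩| < 1 and |⟨u, ∇g(y)⟩| ≥ 1/√2, then the function F : ℝ^d → ℝ defined by F(z) = g(ρ(z)) + ‖z‖²/5 satisfies ‖∇F(x)‖ ≥ 0.08. -/
/-!
Write `s = √(1 + ‖x‖²/R²)`, so that `ρ(x) = x/s` and `Dρ(x) h = s⁻¹ h - ⟪x, h⟫/(R² s³) x`, a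
symmetric map; hence `∇F(x) = s⁻¹ w - ⟪x, w⟫/(R² s³) x + (2/5) x` with `w = ∇g(ρ(x))`.
If `‖x‖ ≤ 9R/20`, then `s ≤ 11/10` and pairing with `u` shows that the term `s⁻¹ ⟪u, w⟫` of size
at least `(10/11)/√2` dominates the rest, which is at most `0.49 · |⟪u, x⟫| < 0.49 s`.
If `‖x‖ ≥ 9R/20`, pair with `x` instead: `⟪x, Dρ(x) w⟫ = ⟪x, w⟫/s³` is at most `‖x‖ R/6` in size
because `‖w‖ ≤ R/5` and `s³ ≥ 6/5`, while the confining term contributes `(2/5)‖x‖² ≥ (9/50) ‖x‖ R`;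
so `‖∇F(x)‖ ≥ R/75`.
-/

open scoped RealInnerProductSpace

noncomputable def rho {d : ℕ} (R : ℝ) (x : EuclideanSpace ℝ (Fin d)) :
    EuclideanSpace ℝ (Fin d) :=
  (1 / Real.sqrt (1 + ‖x‖^2 / R^2)) • x

open ContinuousLinearMap

section InnerProductSpace

variable {E : Type*} [NormedAddCommGroup E]

noncomputable def rhoScale (R : ℝ) (x : E) : ℝ := √(1 + ‖x‖ ^ 2 / R ^ 2)

lemma rhoScale_sq (R : ℝ) (x : E) : rhoScale R x ^ 2 = 1 + ‖x‖ ^ 2 / R ^ 2 :=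
  Real.sq_sqrt (by positivity)

lemma rhoScale_pos (R : ℝ) (x : E) : 0 < rhoScale R x :=
  Real.sqrt_pos.mpr (by positivity)

variable [InnerProductSpace ℝ E]

lemma hasFDerivAt_inv_rhoScale (R : ℝ) (x : E) :
    HasFDerivAt (fun z => (rhoScale R z)⁻¹) (-(R ^ 2 * rhoScale R x ^ 3)⁻¹ • innerSL ℝ x) x := by
  have ht : 0 < 1 + ‖x‖ ^ 2 / R ^ 2 := by positivity
  have hq : HasFDerivAt (fun z : E => 1 + ‖z‖ ^ 2 / R ^ 2) ((R ^ 2)⁻¹ • 2 • innerSL ℝ x) x := by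
    simpa only [div_eq_inv_mul] using
      ((hasStrictFDerivAt_norm_sq x).hasFDerivAt.const_mul _).const_add 1
  refine (((Real.hasDerivAt_sqrt ht.ne').inv (rhoScale_pos R x).ne').comp_hasFDerivAt x
    hq).congr_fderiv ?_
  ext h
  simp only [one_div, smul_apply, coe_innerSL_apply, nsmul_eq_mul, Nat.cast_ofNat, smul_eq_mul,
    rhoScale]
  ring

lemma hasGradientAt_add_norm_sq_div [CompleteSpace E] {f : E → ℝ} {f' x : E} (hf : HasGradientAt f f' x) (c : ℝ) :
    HasGradientAt (fun z => f z + ‖z‖ ^ 2 / c) (f' + (2 / c) • x) x := by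
  rw [hasGradientAt_iff_hasFDerivAt]
  simp_rw [div_eq_mul_inv _ c]
  refine (hf.hasFDerivAt.add
    ((hasStrictFDerivAt_norm_sq x).hasFDerivAt.mul_const c⁻¹)).congr_fderiv ?_
  ext h
  simp only [add_apply, InnerProductSpace.toDual_apply_apply, smul_apply, coe_innerSL_apply,
    nsmul_eq_mul, Nat.cast_ofNat, smul_eq_mul, map_add, map_smul]
  ring

lemma le_abs_inner_of_norm_le {x u w : E} {R s : ℝ} (hR : 0 < R) (hs0 : 0 < s)
    (hs : s ^ 2 = 1 + ‖x‖ ^ 2 / R ^ 2) (hx : ‖x‖ ≤ 9 / 20 * R) (hw : ‖w‖ ≤ R / 5)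
    (hux : |⟪u, x⟫| ≤ s) (huw : 1 / √2 ≤ |⟪u, w⟫|) :
    0.08 ≤ |⟪u, s⁻¹ • w - (⟪x, w⟫ / (R ^ 2 * s ^ 3)) • x + (2 / 5 : ℝ) • x⟫| := by
  set b := 2 / 5 - ⟪x, w⟫ / (R ^ 2 * s ^ 3)
  have hxR : ‖x‖ ^ 2 / R ^ 2 ≤ 81 / 400 := by
    rw [div_le_iff₀ (by positivity)]
    nlinarith [norm_nonneg x]
  have hs1 : 1 ≤ s := by nlinarith [div_nonneg (sq_nonneg ‖x‖) (sq_nonneg R)]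
  have hs11 : s ≤ 11 / 10 := by nlinarith
  have hxw : |⟪x, w⟫| ≤ 9 / 100 * R ^ 2 :=
    calc |⟪x, w⟫| ≤ ‖x‖ * ‖w‖ := abs_real_inner_le_norm x w
      _ ≤ 9 / 20 * R * (R / 5) := by gcongr
      _ = 9 / 100 * R ^ 2 := by ring
  have hb : |b| ≤ 49 / 100 := by
    have : |⟪x, w⟫ / (R ^ 2 * s ^ 3)| ≤ 9 / 100 := by
      have hRs : 0 < R ^ 2 * s ^ 3 := by positivity
      rw [abs_div, abs_of_pos hRs, div_le_iff₀ hRs]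
      nlinarith [one_le_pow₀ (n := 3) hs1, sq_nonneg R]
    calc |b| ≤ |(2 / 5 : ℝ)| + |⟪x, w⟫ / (R ^ 2 * s ^ 3)| := abs_sub _ _
      _ ≤ 49 / 100 := by rw [abs_of_pos (by norm_num)]; linarith
  have hinner : ⟪u, s⁻¹ • w - (⟪x, w⟫ / (R ^ 2 * s ^ 3)) • x + (2 / 5 : ℝ) • x⟫
      = s⁻¹ * ⟪u, w⟫ + b * ⟪u, x⟫ := by
    simp only [b, inner_add_right, inner_sub_right, real_inner_smul_right]
    ring
  have hmain : 7 / 11 ≤ |s⁻¹ * ⟪u, w⟫| := by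
    have hsqrt2 : 7 / 10 ≤ 1 / √2 := by
      rw [le_div_iff₀ (by positivity)]
      nlinarith [Real.sq_sqrt (zero_le_two (α := ℝ)), Real.sqrt_nonneg 2]
    rw [abs_mul, abs_inv, abs_of_pos hs0, inv_mul_eq_div, le_div_iff₀ hs0]
    nlinarith
  have herr : |b * ⟪u, x⟫| ≤ 49 / 100 * (11 / 10) := by
    rw [abs_mul]
    exact mul_le_mul hb (hux.trans hs11) (abs_nonneg _) (by norm_num)
  rw [hinner]
  calc (0.08 : ℝ) ≤ 7 / 11 - 49 / 100 * (11 / 10) := by norm_num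
    _ ≤ |s⁻¹ * ⟪u, w⟫| - |b * ⟪u, x⟫| := by linarith
    _ ≤ |s⁻¹ * ⟪u, w⟫ + b * ⟪u, x⟫| := abs_sub_abs_le_abs_add _ _

lemma inner_self_left_smul_sub_smul_add_smul {x w : E} {R s : ℝ} (hR : R ≠ 0) (hs0 : 0 < s)
    (hs : s ^ 2 = 1 + ‖x‖ ^ 2 / R ^ 2) :
    ⟪x, s⁻¹ • w - (⟪x, w⟫ / (R ^ 2 * s ^ 3)) • x + (2 / 5 : ℝ) • x⟫
      = ⟪x, w⟫ / s ^ 3 + 2 / 5 * ‖x‖ ^ 2 := by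
  simp only [inner_add_right, inner_sub_right, real_inner_smul_right, real_inner_self_eq_norm_sq]
  have : ‖x‖ ^ 2 = R ^ 2 * (s ^ 2 - 1) := by rw [hs]; field_simp; ring
  rw [this]
  field_simp
  ring

lemma le_norm_of_mul_le_norm {x w : E} {R s : ℝ} (hR : 230 ≤ R) (hs0 : 0 < s)
    (hs : s ^ 2 = 1 + ‖x‖ ^ 2 / R ^ 2) (hx : 9 / 20 * R ≤ ‖x‖) (hw : ‖w‖ ≤ R / 5) :
    0.08 ≤ ‖s⁻¹ • w - (⟪x, w⟫ / (R ^ 2 * s ^ 3)) • x + (2 / 5 : ℝ) • x‖ := by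
  set v := s⁻¹ • w - (⟪x, w⟫ / (R ^ 2 * s ^ 3)) • x + (2 / 5 : ℝ) • x
  have hxpos : 0 < ‖x‖ := by linarith
  have hs3 : 6 / 5 ≤ s ^ 3 := by
    have : 1 / 5 ≤ ‖x‖ ^ 2 / R ^ 2 := by
      rw [le_div_iff₀ (by positivity)]
      nlinarith
    nlinarith
  have hxw : |⟪x, w⟫| ≤ ‖x‖ * (R / 5) :=
    (abs_real_inner_le_norm x w).trans (mul_le_mul_of_nonneg_left hw (norm_nonneg x))
  have hxv : ‖x‖ * (R / 75) ≤ ⟪x, v⟫ := by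
    rw [inner_self_left_smul_sub_smul_add_smul (by positivity) hs0 hs]
    have : |⟪x, w⟫ / s ^ 3| ≤ ‖x‖ * (R / 5) / (6 / 5) := by
      rw [abs_div, abs_of_pos (pow_pos hs0 3)]
      exact div_le_div₀ (by positivity) hxw (by norm_num) hs3
    nlinarith [neg_le_of_abs_le this]
  nlinarith [real_inner_le_norm x v]

end InnerProductSpace

variable {d : ℕ}

lemma rho_eq_smul (R : ℝ) (x : EuclideanSpace ℝ (Fin d)) : rho R x = (rhoScale R x)⁻¹ • x := by
  rw [rho, one_div, rhoScale]

lemma hasFDerivAt_rho (R : ℝ) (x : EuclideanSpace ℝ (Fin d)) :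
    HasFDerivAt (rho R) ((rhoScale R x)⁻¹ • ContinuousLinearMap.id ℝ _ -
      (R ^ 2 * rhoScale R x ^ 3)⁻¹ • (innerSL ℝ x).smulRight x) x := by
  rw [funext (rho_eq_smul R)]
  refine ((hasFDerivAt_inv_rhoScale R x).smul (hasFDerivAt_id x)).congr_fderiv ?_
  ext h : 1
  simp only [add_apply, sub_apply, smul_apply, ContinuousLinearMap.id_apply, smulRight_apply,
    coe_innerSL_apply, id_eq]
  module

lemma hasGradientAt_comp_rho {g : EuclideanSpace ℝ (Fin d) → ℝ} {R : ℝ}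
    {x : EuclideanSpace ℝ (Fin d)} (hg : DifferentiableAt ℝ g (rho R x)) :
    HasGradientAt (fun z => g (rho R z))
      ((rhoScale R x)⁻¹ • gradient g (rho R x) -
        (⟪x, gradient g (rho R x)⟫ / (R ^ 2 * rhoScale R x ^ 3)) • x) x := by
  rw [hasGradientAt_iff_hasFDerivAt]
  refine (hg.hasGradientAt.hasFDerivAt.comp x (hasFDerivAt_rho R x)).congr_fderiv ?_
  ext h : 1
  simp only [InnerProductSpace.toDual_apply_apply, comp_apply, sub_apply, smul_apply,
    ContinuousLinearMap.id_apply, smulRight_apply, coe_innerSL_apply, inner_sub_left,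
    inner_sub_right, real_inner_smul_left, real_inner_smul_right]
  rw [real_inner_comm x]
  ring

lemma inner_rho (R : ℝ) (u x : EuclideanSpace ℝ (Fin d)) :
    ⟪u, rho R x⟫ = ⟪u, x⟫ / rhoScale R x := by
  rw [rho_eq_smul, real_inner_smul_right, inv_mul_eq_div]

theorem stmt_10_general (r d : ℕ)
    (g : EuclideanSpace ℝ (Fin d) → ℝ) (hg : ContDiff ℝ 1 g)
    (hgrad : ∀ y : EuclideanSpace ℝ (Fin d),
      ‖gradient g y‖ ≤ 46 * Real.sqrt ((r : ℝ) + 1))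
    (x : EuclideanSpace ℝ (Fin d))
    (u : EuclideanSpace ℝ (Fin d)) (hu : ‖u‖ = 1)
    (h1 : |⟪u, rho (230 * Real.sqrt ((r : ℝ) + 1)) x⟫| < 1)
    (h2 : 1 / Real.sqrt 2 ≤
      |⟪u, gradient g (rho (230 * Real.sqrt ((r : ℝ) + 1)) x)⟫|) :
    0.08 ≤ ‖gradient (fun z : EuclideanSpace ℝ (Fin d) =>
      g (rho (230 * Real.sqrt ((r : ℝ) + 1)) z) + ‖z‖^2 / 5) x‖ := by
  set R := 230 * √((r : ℝ) + 1)
  have hR : 230 ≤ R := le_mul_of_one_le_right (by norm_num) (Real.one_le_sqrt.mpr (by simp))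
  have hw : ‖gradient g (rho R x)‖ ≤ R / 5 := (hgrad _).trans_eq (by ring)
  have hs0 := rhoScale_pos R x
  have hux : |⟪u, x⟫| ≤ rhoScale R x := by
    rw [inner_rho, abs_div, abs_of_pos hs0, div_lt_one hs0] at h1
    exact h1.le
  rw [(hasGradientAt_add_norm_sq_div
    (hasGradientAt_comp_rho (hg.differentiable one_ne_zero _)) 5).gradient]
  rcases le_or_gt ‖x‖ (9 / 20 * R) with hx | hx
  · refine (le_abs_inner_of_norm_le (by positivity) hs0 (rhoScale_sq R x) hx hw hux h2).trans ?_
    simpa only [hu, one_mul] using abs_real_inner_le_norm u _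
  · exact le_norm_of_mul_le_norm hR hs0 (rhoScale_sq R x) hx.le hw

theorem stmt_10 (r d : ℕ) (hr : 1 ≤ r) (hd : 1 ≤ d)
    (g : EuclideanSpace ℝ (Fin d) → ℝ) (hg : ContDiff ℝ 1 g)
    (hgrad : ∀ y : EuclideanSpace ℝ (Fin d),
      ‖gradient g y‖ ≤ 46 * Real.sqrt ((r : ℝ) + 1))
    (x : EuclideanSpace ℝ (Fin d))
    (u : EuclideanSpace ℝ (Fin d)) (hu : ‖u‖ = 1)
    (h1 : |⟪u, rho (230 * Real.sqrt ((r : ℝ) + 1)) x⟫| < 1)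
    (h2 : 1 / Real.sqrt 2 ≤
      |⟪u, gradient g (rho (230 * Real.sqrt ((r : ℝ) + 1)) x)⟫|) :
    0.08 ≤ ‖gradient (fun z : EuclideanSpace ℝ (Fin d) =>
      g (rho (230 * Real.sqrt ((r : ℝ) + 1)) z) + ‖z‖^2 / 5) x‖ :=
  stmt_10_general r d g hg hgrad x u hu h1 h2
end

section
/- Let f : ℝ^d → ℝ be continuously differentiable with L-Lipschitz gradient for some L > 0, let R be a full-dimensional hyperrectangle in ℝ^d, let x ∈ R and let ε > 0. If every point y in the topological boundary ∂R is ε-unreachable from x, then R contains an ε-stationary point of f, i.e. a point z ∈ R with ‖∇f(z)‖ ≤ ε. -/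
/-!
Minimise `g y = f y + ε ‖x - y‖` over the compact box `R`. At a boundary point `y` the
unreachability hypothesis says `g y > f x = g x`, so the minimiser `z` lies in the interior and is
a local minimum of `g`. Moving from `z` a distance `t` in any direction changes the penalty term by
at most `ε t`, so the directional derivatives of `f` at `z` are at least `-ε` in every unit
direction, which gives `‖∇f(z)‖ ≤ ε`.
-/

open Set Filter Topology

section PenalizedLocalMin

variable {E : Type*} [NormedAddCommGroup E] [NormedSpace ℝ E]
  {f : E → ℝ} {f' : E →L[ℝ] ℝ} {x₀ z : E} {ε : ℝ}

theorem IsLocalMin.neg_mul_norm_le_fderiv_apply (hε : 0 ≤ ε)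
    (hmin : IsLocalMin (fun y => f y + ε * ‖x₀ - y‖) z) (hf : HasFDerivAt f f' z) (v : E) :
    -(ε * ‖v‖) ≤ f' v := by
  set φ : ℝ → ℝ := fun t => f (z + t • v) + t * (ε * ‖v‖)
  have hline : HasDerivAt (fun t : ℝ => z + t • v) v 0 := by
    simpa using ((hasDerivAt_id (0 : ℝ)).smul_const v).const_add z
  have hφ : HasDerivAt φ (f' v + ε * ‖v‖) 0 := by
    have hf0 : HasFDerivAt f f' (z + (0 : ℝ) • v) := by simpa using hf
    exact (hf0.comp_hasDerivAt 0 hline).add (hasDerivAt_mul_const _)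
  have hφmin : IsLocalMinOn φ (Ici 0) 0 := by
    have hmin0 : IsLocalMin (fun y => f y + ε * ‖x₀ - y‖) (z + (0 : ℝ) • v) := by
      rwa [zero_smul, add_zero]
    have hline_min : IsLocalMin (fun t : ℝ => f (z + t • v) + ε * ‖x₀ - (z + t • v)‖) 0 :=
      hmin0.comp_continuous (g := fun t : ℝ => z + t • v) (by fun_prop)
    filter_upwards [nhdsWithin_le_nhds hline_min, self_mem_nhdsWithin]
      with t ht (ht0 : 0 ≤ t)
    have htri : ‖x₀ - (z + t • v)‖ ≤ ‖x₀ - z‖ + t * ‖v‖ := by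
      calc ‖x₀ - (z + t • v)‖ = ‖(x₀ - z) - t • v‖ := by rw [sub_add_eq_sub_sub]
        _ ≤ ‖x₀ - z‖ + ‖t • v‖ := norm_sub_le _ _
        _ = ‖x₀ - z‖ + t * ‖v‖ := by rw [norm_smul, Real.norm_of_nonneg ht0]
    simp only [φ, zero_smul, add_zero, zero_mul] at ht ⊢
    linarith [mul_le_mul_of_nonneg_left htri hε]
  have hone : (1 : ℝ) ∈ posTangentConeAt (Ici 0) 0 :=
    mem_posTangentConeAt_of_segment_subset (by simp [segment_eq_Icc, Icc_subset_Ici_self])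
  have hφ' : 0 ≤ f' v + ε * ‖v‖ := by
    simpa using hφmin.hasFDerivWithinAt_nonneg hφ.hasFDerivAt.hasFDerivWithinAt hone
  linarith

theorem IsLocalMin.norm_fderiv_le (hε : 0 ≤ ε)
    (hmin : IsLocalMin (fun y => f y + ε * ‖x₀ - y‖) z) (hf : HasFDerivAt f f' z) :
    ‖f'‖ ≤ ε := by
  refine f'.opNorm_le_bound hε fun v => abs_le.2 ⟨?_, ?_⟩
  · exact hmin.neg_mul_norm_le_fderiv_apply hε hf v
  · simpa [norm_neg] using hmin.neg_mul_norm_le_fderiv_apply hε hf (-v)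

theorem IsLocalMin.norm_gradient_le {F : Type*} [NormedAddCommGroup F] [InnerProductSpace ℝ F]
    [CompleteSpace F] {f : F → ℝ} {x₀ z : F} (hε : 0 ≤ ε)
    (hmin : IsLocalMin (fun y => f y + ε * ‖x₀ - y‖) z) (hf : DifferentiableAt ℝ f z) :
    ‖gradient f z‖ ≤ ε := by
  rw [gradient, LinearIsometryEquiv.norm_map]
  exact hmin.norm_fderiv_le hε hf.hasFDerivAt

end PenalizedLocalMin

theorem IsCompact.exists_isLocalMin_add_mul_norm_sub {E : Type*} [NormedAddCommGroup E]
    {f : E → ℝ} {ε : ℝ} {K : Set E} (hK : IsCompact K) {x : E}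
    (hx : x ∈ K) (hf : ContinuousOn f K)
    (hunreach : ∀ y ∈ frontier K, f y > f x - ε * ‖x - y‖) :
    ∃ z ∈ K, IsLocalMin (fun y => f y + ε * ‖x - y‖) z := by
  set g : E → ℝ := fun y => f y + ε * ‖x - y‖
  have hg : ContinuousOn g K := hf.add (by fun_prop : Continuous fun y => ε * ‖x - y‖).continuousOn
  obtain ⟨z, hzK, hzmin⟩ := hK.exists_isMinOn ⟨x, hx⟩ hg
  have hz_interior : z ∈ interior K := by
    by_contra hz
    have hz_frontier : z ∈ frontier K := by
      rw [frontier, hK.isClosed.closure_eq]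
      exact ⟨hzK, hz⟩
    have hgz : g z ≤ g x := hzmin hx
    have := hunreach z hz_frontier
    simp only [g, sub_self, norm_zero, mul_zero, add_zero] at hgz
    linarith
  exact ⟨z, hzK, hzmin.isLocalMin (mem_interior_iff_mem_nhds.1 hz_interior)⟩

theorem EuclideanSpace.isCompact_box {ι : Type*} [Fintype ι] (a b : ι → ℝ) :
    IsCompact {x : EuclideanSpace ℝ ι | ∀ i, x i ∈ Icc (a i) (b i)} := by
  have hbox : {x : EuclideanSpace ℝ ι | ∀ i, x i ∈ Icc (a i) (b i)} =
      (PiLp.continuousLinearEquiv 2 ℝ (fun _ : ι => ℝ)).toHomeomorph ⁻¹'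
        (univ.pi fun i => Icc (a i) (b i)) := by
    ext y
    simp [Pi.le_def, forall_and]
  rw [hbox, Homeomorph.isCompact_preimage]
  exact isCompact_univ_pi fun _ => isCompact_Icc

theorem stmt_11_general (d : ℕ)
    (f : EuclideanSpace ℝ (Fin d) → ℝ)
    (hf : ContDiff ℝ 1 f)
    (a b : Fin d → ℝ)
    (R : Set (EuclideanSpace ℝ (Fin d)))
    (hR : R = {x : EuclideanSpace ℝ (Fin d) | ∀ i, x i ∈ Set.Icc (a i) (b i)})
    (x : EuclideanSpace ℝ (Fin d)) (hx : x ∈ R)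
    (ε : ℝ) (hε : 0 < ε)
    (hunreach : ∀ y ∈ frontier R, f y > f x - ε * ‖x - y‖) :
    ∃ z ∈ R, ‖gradient f z‖ ≤ ε := by
  have hR_compact : IsCompact R := hR ▸ EuclideanSpace.isCompact_box a b
  obtain ⟨z, hzR, hmin⟩ :=
    hR_compact.exists_isLocalMin_add_mul_norm_sub hx hf.continuous.continuousOn hunreach
  exact ⟨z, hzR, hmin.norm_gradient_le hε.le (hf.differentiable one_ne_zero z)⟩

theorem stmt_11 (d : ℕ) (hd : 1 ≤ d)
    (f : EuclideanSpace ℝ (Fin d) → ℝ) (L : ℝ) (hL : 0 < L)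
    (hf : ContDiff ℝ 1 f)
    (hlip : ∀ x y : EuclideanSpace ℝ (Fin d),
      ‖gradient f x - gradient f y‖ ≤ L * ‖x - y‖)
    (a b : Fin d → ℝ) (hab : ∀ i, a i < b i)
    (R : Set (EuclideanSpace ℝ (Fin d)))
    (hR : R = {x : EuclideanSpace ℝ (Fin d) | ∀ i, x i ∈ Set.Icc (a i) (b i)})
    (x : EuclideanSpace ℝ (Fin d)) (hx : x ∈ R)
    (ε : ℝ) (hε : 0 < ε)
    (hunreach : ∀ y ∈ frontier R, f y > f x - ε * ‖x - y‖) :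
    ∃ z ∈ R, ‖gradient f z‖ ≤ ε :=
  stmt_11_general d f hf a b R hR x hx ε hε hunreach
end

section
/- Let f : ℝ^d → ℝ be continuously differentiable with L-Lipschitz gradient for some L > 0, let R = [a₁,b₁] × ⋯ × [a_d,b_d] be a full-dimensional hyperrectangle in ℝ^d, let x ∈ R and let ε > 0. If every point y in the topological boundary ∂R is (ε/2)-unreachable from x, and max_i (b_i − a_i) ≤ ε/(2·√d·L), then x is an ε-stationary point of f, i.e. ‖∇f(x)‖ ≤ ε. -/
/-!
Suppose `‖∇f(x)‖ > ε` and walk from `x` in the direction of steepest descent `-∇f(x)/‖∇f(x)‖`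
until the walk leaves `R`, at a point `y ∈ ∂R` with `T = ‖y - x‖ ≤ √d · maxᵢ (bᵢ - aᵢ) ≤ ε / (2L)`.
The Lipschitz gradient bounds the error of the linear approximation of `f` by `L T²`, so
`f(y) ≤ f(x) - T ‖∇f(x)‖ + L T² < f(x) - (ε/2) T`, and `y` is not `(ε/2)`-unreachable.
-/

open RealInnerProductSpace

theorem EuclideanSpace.norm_le_sqrt_card_mul {ι : Type*} [Fintype ι] {v : EuclideanSpace ℝ ι}
    {s : ℝ} (hv : ∀ i, |v i| ≤ s) : ‖v‖ ≤ √(Fintype.card ι) * s := by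
  rcases isEmpty_or_nonempty ι with hι | ⟨⟨i⟩⟩
  · simp [Subsingleton.elim v 0]
  have hs : 0 ≤ s := (abs_nonneg _).trans (hv i)
  calc ‖v‖ = √(∑ i, ‖v i‖ ^ 2) := EuclideanSpace.norm_eq v
    _ ≤ √(∑ _ : ι, s ^ 2) := by
      gcongr with i
      exact hv i
    _ = √(Fintype.card ι) * s := by
      simp only [Finset.sum_const, Finset.card_univ, nsmul_eq_mul]
      rw [Real.sqrt_mul (Nat.cast_nonneg _), Real.sqrt_sq hs]

theorem EuclideanSpace.isClosed_setOf_forall_mem_Icc {ι : Type*} [Fintype ι] (a b : ι → ℝ) :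
    IsClosed {x : EuclideanSpace ℝ ι | ∀ i, x i ∈ Set.Icc (a i) (b i)} := by
  rw [Set.ofPred_forall]
  exact isClosed_iInter fun i ↦ isClosed_Icc.preimage (by fun_prop)

theorem EuclideanSpace.norm_sub_le_of_forall_mem_Icc {ι : Type*} [Fintype ι] {a b : ι → ℝ}
    {s : ℝ} (hs : ∀ i, b i - a i ≤ s) {x z : EuclideanSpace ℝ ι}
    (hx : ∀ i, x i ∈ Set.Icc (a i) (b i)) (hz : ∀ i, z i ∈ Set.Icc (a i) (b i)) :
    ‖z - x‖ ≤ √(Fintype.card ι) * s := by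
  refine EuclideanSpace.norm_le_sqrt_card_mul fun i ↦ ?_
  rw [PiLp.sub_apply, abs_sub_le_iff]
  constructor <;> linarith [(hz i).1, (hz i).2, (hx i).1, (hx i).2, hs i]

theorem exists_add_smul_mem_frontier {E : Type*} [AddCommGroup E] [Module ℝ E]
    [TopologicalSpace E] [ContinuousAdd E] [ContinuousSMul ℝ E] {K : Set E} {x v : E} {t₀ : ℝ}
    (ht₀ : 0 ≤ t₀) (hx : x ∈ K) (hexit : x + t₀ • v ∉ K) :
    ∃ t ∈ Set.Icc 0 t₀, x + t • v ∈ frontier K := by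
  have := Subtype.preconnectedSpace (isPreconnected_Icc (a := 0) (b := t₀))
  let ray : Set.Icc 0 t₀ → E := fun t ↦ x + (t : ℝ) • v
  have hray : Continuous ray := by fun_prop
  obtain ⟨t, ht⟩ : (frontier (ray ⁻¹' K)).Nonempty := by
    refine nonempty_frontier_iff.2 ⟨⟨⟨0, le_rfl, ht₀⟩, by simpa [ray] using hx⟩, fun h ↦ hexit ?_⟩
    simpa [ray] using h.ge (Set.mem_univ ⟨t₀, ht₀, le_rfl⟩)
  exact ⟨t, t.2, hray.frontier_preimage_subset K ht⟩

theorem exists_add_smul_mem_frontier_of_norm_sub_le {E : Type*} [NormedAddCommGroup E]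
    [NormedSpace ℝ E] {K : Set E} {x v : E} {r : ℝ} (hK : IsClosed K) (hx : x ∈ K)
    (hr : ∀ z ∈ K, ‖z - x‖ ≤ r) (hv : ‖v‖ = 1) :
    ∃ t, 0 ≤ t ∧ t ≤ r ∧ x + t • v ∈ frontier K := by
  have hr0 : 0 ≤ r := by simpa using hr x hx
  have hnorm : ∀ t, 0 ≤ t → ‖x + t • v - x‖ = t := fun t ht ↦ by
    rw [add_sub_cancel_left, norm_smul, hv, mul_one, Real.norm_of_nonneg ht]
  have hexit : x + (r + 1) • v ∉ K := fun h ↦ by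
    linarith [hnorm (r + 1) (by positivity) ▸ hr _ h]
  obtain ⟨t, ⟨ht0, -⟩, ht⟩ := exists_add_smul_mem_frontier (by positivity) hx hexit
  exact ⟨t, ht0, hnorm t ht0 ▸ hr _ (hK.frontier_subset ht), ht⟩

theorem abs_sub_sub_inner_gradient_le {F : Type*} [NormedAddCommGroup F] [InnerProductSpace ℝ F]
    [CompleteSpace F] {f : F → ℝ} {L : ℝ} {x y : F} (hL : 0 ≤ L) (hf : Differentiable ℝ f)
    (hlip : ∀ z, ‖gradient f z - gradient f x‖ ≤ L * ‖z - x‖) :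
    |f y - f x - ⟪gradient f x, y - x⟫| ≤ L * ‖y - x‖ ^ 2 := by
  have hbound : ∀ z ∈ segment ℝ x y,
      ‖InnerProductSpace.toDual ℝ F (gradient f z) - InnerProductSpace.toDual ℝ F (gradient f x)‖
        ≤ L * ‖y - x‖ := fun z hz ↦ by
    rw [← map_sub, LinearIsometryEquiv.norm_map]
    exact (hlip z).trans (by gcongr; exact norm_sub_le_of_mem_segment hz)
  have := (convex_segment x y).norm_image_sub_le_of_norm_hasFDerivWithin_le'
    (fun z _ ↦ (hf z).hasGradientAt.hasFDerivAt.hasFDerivWithinAt) hbound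
    (left_mem_segment ℝ x y) (right_mem_segment ℝ x y)
  rw [InnerProductSpace.toDual_apply_apply, Real.norm_eq_abs] at this
  linarith

theorem stmt_12_general (d : ℕ)
    (f : EuclideanSpace ℝ (Fin d) → ℝ) (L : ℝ) (hL : 0 < L)
    (hf : ContDiff ℝ 1 f)
    (hlip : ∀ x y : EuclideanSpace ℝ (Fin d),
      ‖gradient f x - gradient f y‖ ≤ L * ‖x - y‖)
    (a b : Fin d → ℝ)
    (R : Set (EuclideanSpace ℝ (Fin d)))
    (hR : R = {x : EuclideanSpace ℝ (Fin d) | ∀ i, x i ∈ Set.Icc (a i) (b i)})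
    (x : EuclideanSpace ℝ (Fin d)) (hx : x ∈ R)
    (ε : ℝ) (hε : 0 < ε)
    (hunreach : ∀ y ∈ frontier R, f y > f x - (ε / 2) * ‖x - y‖)
    (hside : ∀ i, b i - a i ≤ ε / (2 * Real.sqrt d * L)) :
    ‖gradient f x‖ ≤ ε := by
  set g := gradient f x
  by_contra! hg
  have hdiam : ∀ z ∈ R, ‖z - x‖ ≤ ε / (2 * L) := fun z hz ↦ by
    subst hR
    refine (EuclideanSpace.norm_sub_le_of_forall_mem_Icc hside hx hz).trans ?_
    rw [Fintype.card_fin]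
    rcases (Real.sqrt_nonneg d).eq_or_lt with hd | hd
    · rw [← hd, zero_mul]; positivity
    · rw [mul_div_assoc', mul_comm 2, mul_assoc, mul_div_mul_left _ _ hd.ne']
  set v := -(‖g‖⁻¹ • g) with hv_def
  have hv : ‖v‖ = 1 := by
    rw [norm_neg, norm_smul, norm_inv, norm_norm, inv_mul_cancel₀ (by linarith)]
  obtain ⟨T, hT0, hTle, hy⟩ := exists_add_smul_mem_frontier_of_norm_sub_le
    (hR ▸ EuclideanSpace.isClosed_setOf_forall_mem_Icc a b) hx hdiam hv
  have hnorm : ‖x - (x + T • v)‖ = T := by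
    rw [sub_add_cancel_left, norm_neg, norm_smul, hv, mul_one, Real.norm_of_nonneg hT0]
  have hinner : ⟪g, x + T • v - x⟫ = -(T * ‖g‖) := by
    rw [add_sub_cancel_left, hv_def, inner_smul_right, inner_neg_right, inner_smul_right,
      real_inner_self_eq_norm_sq]
    field_simp
  have hdescent := (abs_le.mp (abs_sub_sub_inner_gradient_le (y := x + T • v) hL.le
    (hf.differentiable one_ne_zero) (hlip · x))).2
  rw [hinner, norm_sub_rev, hnorm] at hdescent
  have hreach := hunreach _ hy
  rw [hnorm] at hreach
  have hTpos : 0 < T := hT0.lt_of_ne fun h ↦ by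
    subst h
    simp at hreach
  have hLT : L * T ≤ ε / 2 :=
    calc L * T ≤ L * (ε / (2 * L)) := by gcongr
      _ = ε / 2 := by field_simp
  linarith [mul_lt_mul_of_pos_left hg hTpos, mul_le_mul_of_nonneg_right hLT hT0]

theorem stmt_12 (d : ℕ) (hd : 1 ≤ d)
    (f : EuclideanSpace ℝ (Fin d) → ℝ) (L : ℝ) (hL : 0 < L)
    (hf : ContDiff ℝ 1 f)
    (hlip : ∀ x y : EuclideanSpace ℝ (Fin d),
      ‖gradient f x - gradient f y‖ ≤ L * ‖x - y‖)
    (a b : Fin d → ℝ) (hab : ∀ i, a i < b i)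
    (R : Set (EuclideanSpace ℝ (Fin d)))
    (hR : R = {x : EuclideanSpace ℝ (Fin d) | ∀ i, x i ∈ Set.Icc (a i) (b i)})
    (x : EuclideanSpace ℝ (Fin d)) (hx : x ∈ R)
    (ε : ℝ) (hε : 0 < ε)
    (hunreach : ∀ y ∈ frontier R, f y > f x - (ε / 2) * ‖x - y‖)
    (hside : ∀ i, b i - a i ≤ ε / (2 * Real.sqrt d * L)) :
    ‖gradient f x‖ ≤ ε :=
  stmt_12_general d f L hL hf hlip a b R hR x hx ε hε hunreach hside
end

section
/- Let R = [a₁,b₁] × ⋯ × [a_d,b_d] be a k-dimensional hyperrectangle in ℝ^d with k ≥ 1, and let δ > 0. Then there exists a nice δ-net S of R with cardinality |S| = ∏_{i=1}^{d} (⌈√k·(b_i − a_i)/(2δ)⌉ + 1). In particular, if R is (d−1)-dimensional, then |S| ≤ (√d·r/(2δ))^{d−1} for any r satisfying r ≥ max_i (b_i − a_i) and r ≥ 8·√d·δ. -/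
/-- A face of the hyperrectangle `∏ i, [a i, b i]`: each coordinate interval is either kept
or replaced by one of its endpoints. -/
def IsFace {d : ℕ} (a b : Fin d → ℝ) (F : Set (EuclideanSpace ℝ (Fin d))) : Prop :=
  ∃ c : Fin d → Set ℝ,
    (∀ i, c i = Set.Icc (a i) (b i) ∨ c i = {a i} ∨ c i = {b i}) ∧
    F = {x : EuclideanSpace ℝ (Fin d) | ∀ i, x i ∈ c i}

/-- `S` is a `δ`-net of `F`: `S ⊆ F` and every point of `F` is within distance `δ` of `S`. -/
def IsDeltaNet {d : ℕ} (δ : ℝ) (F S : Set (EuclideanSpace ℝ (Fin d))) : Prop :=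
  S ⊆ F ∧ ∀ y ∈ F, ∃ z ∈ S, dist y z ≤ δ

/-- `S` is a nice `δ`-net of the hyperrectangle `∏ i, [a i, b i]`. -/
def IsNiceDeltaNet {d : ℕ} (δ : ℝ) (a b : Fin d → ℝ)
    (S : Set (EuclideanSpace ℝ (Fin d))) : Prop :=
  S ⊆ {x : EuclideanSpace ℝ (Fin d) | ∀ i, x i ∈ Set.Icc (a i) (b i)} ∧
  ∀ F : Set (EuclideanSpace ℝ (Fin d)), IsFace a b F → IsDeltaNet δ F (S ∩ F)

/-!
Use the product grid with `mᵢ = ⌈√k (bᵢ - aᵢ) / (2δ)⌉` equal steps along coordinate `i`.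
Every coordinate grid contains both endpoints, so the grid points lying in a face form the
grid of that face. Rounding each coordinate of a point of a face to the nearest grid value
allowed by the face moves it by at most half a step, which is at most `δ / √k` in the `k`
nondegenerate coordinates and `0` in the others, hence the point moves by at most `δ`.
For the size bound each nondegenerate factor is below `√(d-1) r / (2δ) + 2 ≤ √d r / (2δ)`,
the last inequality because `(√d - √(d-1)) r ≥ r / (2√d) ≥ 4δ`.
-/

open Finset

/-- The `j`-th of the `m + 1` equally spaced points from `a` to `b`; for `m = 0` division by
zero makes every point equal to `a`. -/
noncomputable def gridPoint (a b : ℝ) (m j : ℕ) : ℝ := a + j * ((b - a) / m)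

section gridPoint

variable {a b : ℝ} {m j : ℕ}

@[simp]
lemma gridPoint_zero : gridPoint a b m 0 = a := by simp [gridPoint]

lemma gridPoint_self (hm : m ≠ 0) : gridPoint a b m m = b := by
  rw [gridPoint, mul_div_cancel₀ _ (Nat.cast_ne_zero.2 hm)]
  ring

lemma gridPoint_mem_Icc (hab : a ≤ b) (hj : j ≤ m) : gridPoint a b m j ∈ Set.Icc a b := by
  rcases Nat.eq_zero_or_pos m with rfl | hm
  · obtain rfl : j = 0 := Nat.le_zero.1 hj
    simp [hab]
  have hm' : (0 : ℝ) < m := Nat.cast_pos.2 hm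
  have hjm : (j : ℝ) / m ≤ 1 := (div_le_one hm').2 (Nat.cast_le.2 hj)
  have hstep : gridPoint a b m j = a + j / m * (b - a) := by rw [gridPoint]; ring
  rw [hstep, Set.mem_Icc]
  constructor <;> nlinarith [div_nonneg (Nat.cast_nonneg j) hm'.le]

lemma gridPoint_injOn (h : m ≠ 0 → a ≠ b) : Set.InjOn (gridPoint a b m) (Set.Iic m) := by
  intro i hi j hj hij
  rcases eq_or_ne m 0 with rfl | hm
  · simp_all
  have hstep : (b - a) / m ≠ 0 := div_ne_zero (sub_ne_zero.2 (h hm).symm) (Nat.cast_ne_zero.2 hm)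
  exact_mod_cast mul_right_cancel₀ hstep (add_left_cancel hij)

lemma exists_gridPoint_near_of_mem_Icc {y : ℝ} (hm : m ≠ 0) (hy : y ∈ Set.Icc a b) :
    ∃ j ≤ m, |y - gridPoint a b m j| ≤ (b - a) / (2 * m) := by
  rcases (hy.1.trans hy.2).eq_or_lt with rfl | hab
  · obtain rfl : y = a := le_antisymm hy.2 hy.1
    exact ⟨0, Nat.zero_le m, by simp⟩
  have hm' : (0 : ℝ) < m := Nat.cast_pos.2 (Nat.pos_of_ne_zero hm)
  set h := (b - a) / m with h_def
  have hh : 0 < h := div_pos (sub_pos.2 hab) hm'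
  set t := (y - a) / h
  have ht : 0 ≤ t := div_nonneg (sub_nonneg.2 hy.1) hh.le
  have htm : t ≤ m := by
    rw [div_le_iff₀ hh, h_def, mul_div_cancel₀ _ hm'.ne']
    linarith [hy.2]
  set j := ⌊t + 1 / 2⌋₊
  have hj_le : (j : ℝ) ≤ t + 1 / 2 := Nat.floor_le (by positivity)
  have hj_gt : t + 1 / 2 < j + 1 := Nat.lt_floor_add_one _
  have hjm : (j : ℝ) < m + 1 := by linarith
  refine ⟨j, Nat.lt_succ_iff.1 (by exact_mod_cast hjm), ?_⟩
  have hdiff : y - gridPoint a b m j = (t - j) * h := by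
    rw [gridPoint, sub_mul, div_mul_cancel₀ _ hh.ne']
    ring
  have h2 : (b - a) / (2 * m) = 1 / 2 * h := by rw [h_def]; field_simp
  rw [hdiff, abs_mul, abs_of_pos hh, h2]
  exact mul_le_mul_of_nonneg_right (abs_le.2 ⟨by linarith, by linarith⟩) hh.le

lemma exists_gridPoint_near {c : Set ℝ} {y : ℝ} (hab : a ≤ b) (hm : a < b → m ≠ 0)
    (hc : c = Set.Icc a b ∨ c = {a} ∨ c = {b}) (hy : y ∈ c) :
    ∃ j ≤ m, gridPoint a b m j ∈ c ∧ |y - gridPoint a b m j| ≤ (b - a) / (2 * m) := by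
  rcases hab.eq_or_lt with rfl | hab
  · have hc : c = {a} := by rcases hc with rfl | rfl | rfl <;> simp
    subst hc
    obtain rfl : y = a := hy
    exact ⟨0, Nat.zero_le m, by simp⟩
  replace hm := hm hab
  have hmesh : 0 ≤ (b - a) / (2 * m) := by have := hab.le; positivity
  rcases hc with rfl | rfl | rfl
  · obtain ⟨j, hj, hjy⟩ := exists_gridPoint_near_of_mem_Icc hm hy
    exact ⟨j, hj, gridPoint_mem_Icc hab.le hj, hjy⟩
  · obtain rfl : y = a := hy
    exact ⟨0, Nat.zero_le m, by simp, by simpa using hmesh⟩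
  · obtain rfl : y = b := hy
    exact ⟨m, le_rfl, by simp [gridPoint_self hm], by simpa [gridPoint_self hm] using hmesh⟩

end gridPoint

open Classical in
noncomputable def grid {d : ℕ} (a b : Fin d → ℝ) (m : Fin d → ℕ) :
    Finset (EuclideanSpace ℝ (Fin d)) :=
  (Fintype.piFinset fun i => range (m i + 1)).image fun j =>
    WithLp.toLp 2 fun i => gridPoint (a i) (b i) (m i) (j i)

section grid

variable {d : ℕ} {a b : Fin d → ℝ} {m : Fin d → ℕ}

lemma card_grid (h : ∀ i, m i ≠ 0 → a i ≠ b i) : #(grid a b m) = ∏ i, (m i + 1) := by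
  rw [grid, card_image_of_injOn, Fintype.card_piFinset]
  · simp only [card_range]
  intro j hj j' hj' hjj'
  simp only [Fintype.coe_piFinset, Set.mem_pi, Set.mem_univ, coe_range, Set.mem_Iio,
    forall_const] at hj hj'
  funext i
  exact gridPoint_injOn (h i) (Nat.lt_succ_iff.1 (hj i)) (Nat.lt_succ_iff.1 (hj' i))
    (congrArg (· i) (WithLp.toLp_injective 2 hjj'))

lemma isNiceDeltaNet_grid {δ : ℝ} (hab : ∀ i, a i ≤ b i) (hm : ∀ i, a i < b i → m i ≠ 0)
    (hδ : √(∑ i, ((b i - a i) / (2 * m i)) ^ 2) ≤ δ) :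
    IsNiceDeltaNet δ a b (grid a b m) := by
  have mem_grid : ∀ j : Fin d → ℕ, (∀ i, j i ≤ m i) →
      WithLp.toLp 2 (fun i => gridPoint (a i) (b i) (m i) (j i)) ∈ (grid a b m : Set _) := by
    intro j hj
    simp only [grid, coe_image]
    exact ⟨j, by simpa [Nat.lt_succ_iff] using hj, rfl⟩
  refine ⟨?_, fun F ⟨c, hc, hF⟩ => ⟨Set.inter_subset_right, fun y hy => ?_⟩⟩
  · simp only [grid, coe_image, Set.image_subset_iff]
    intro j hj i
    simp only [Fintype.coe_piFinset, Set.mem_pi, Set.mem_univ, coe_range, Set.mem_Iio,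
      forall_const] at hj
    exact gridPoint_mem_Icc (hab i) (Nat.lt_succ_iff.1 (hj i))
  subst hF
  choose j hjm hjc hjy using fun i => exists_gridPoint_near (hab i) (hm i) (hc i) (hy i)
  refine ⟨_, ⟨mem_grid j hjm, hjc⟩, ?_⟩
  rw [EuclideanSpace.dist_eq]
  refine le_trans (Real.sqrt_le_sqrt (sum_le_sum fun i _ => ?_)) hδ
  rw [Real.dist_eq]
  exact pow_le_pow_left₀ (abs_nonneg _) (hjy i) 2

end grid

section ceilMesh

variable {a b c δ : ℝ}

lemma ceil_mul_sub_div_ne_zero (hc : 0 < c) (hδ : 0 < δ) (hab : a < b) :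
    ⌈c * (b - a) / (2 * δ)⌉₊ ≠ 0 :=
  (Nat.ceil_pos.2 (by have := sub_pos.2 hab; positivity)).ne'

lemma sub_div_two_mul_ceil_le (hc : 0 < c) (hδ : 0 < δ) (hab : a ≤ b) :
    (b - a) / (2 * ⌈c * (b - a) / (2 * δ)⌉₊) ≤ δ / c := by
  rcases hab.eq_or_lt with rfl | hab
  · simp only [sub_self, zero_div]
    positivity
  have hceil : c * (b - a) / (2 * δ) ≤ ⌈c * (b - a) / (2 * δ)⌉₊ := Nat.le_ceil _
  have hpos : (0 : ℝ) < ⌈c * (b - a) / (2 * δ)⌉₊ :=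
    Nat.cast_pos.2 (Nat.pos_of_ne_zero (ceil_mul_sub_div_ne_zero hc hδ hab))
  rw [div_le_iff₀ (by positivity)] at hceil
  rw [div_le_div_iff₀ (by positivity) hc]
  linarith

lemma ceil_mul_sub_div_add_one_le (hc : 0 ≤ c) (hδ : 0 < δ) (hab : a ≤ b) {r : ℝ}
    (hr : b - a ≤ r) : (⌈c * (b - a) / (2 * δ)⌉₊ : ℝ) + 1 ≤ c * r / (2 * δ) + 2 := by
  have h0 : 0 ≤ c * (b - a) / (2 * δ) := by have := sub_nonneg.2 hab; positivity
  have hceil := Nat.ceil_lt_add_one h0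
  have hmono : c * (b - a) / (2 * δ) ≤ c * r / (2 * δ) := by gcongr
  linarith

end ceilMesh

section boxMesh

variable {d k : ℕ} {a b : Fin d → ℝ} {δ : ℝ}

lemma sqrt_sum_sq_sub_div_two_mul_ceil_le (hk : 1 ≤ k) (hab : ∀ i, a i ≤ b i)
    (hdim : (Finset.univ.filter fun i => a i < b i).card = k) (hδ : 0 < δ) :
    √(∑ i, ((b i - a i) / (2 * ⌈√k * (b i - a i) / (2 * δ)⌉₊)) ^ 2) ≤ δ := by
  have hk' : (0 : ℝ) < k := Nat.cast_pos.2 hk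
  have hterm : ∀ i, ((b i - a i) / (2 * ⌈√k * (b i - a i) / (2 * δ)⌉₊)) ^ 2 ≤
      if a i < b i then (δ / √k) ^ 2 else 0 := by
    intro i
    split_ifs with h
    · exact pow_le_pow_left₀ (by have := hab i; positivity)
        (sub_div_two_mul_ceil_le (Real.sqrt_pos.2 hk') hδ (hab i)) 2
    · simp [le_antisymm (hab i) (not_lt.1 h)]
  calc √(∑ i, ((b i - a i) / (2 * ⌈√k * (b i - a i) / (2 * δ)⌉₊)) ^ 2)
      ≤ √(∑ i, if a i < b i then (δ / √k) ^ 2 else 0) :=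
        Real.sqrt_le_sqrt (sum_le_sum fun i _ => hterm i)
    _ = √(δ ^ 2) := by
        rw [← sum_filter, sum_const, hdim, nsmul_eq_mul, div_pow, Real.sq_sqrt hk'.le,
          mul_div_cancel₀ _ hk'.ne']
    _ = δ := Real.sqrt_sq hδ.le

lemma prod_ceil_mul_sub_div_add_one_le {c r : ℝ} (hc : 0 ≤ c) (hδ : 0 < δ)
    (hab : ∀ i, a i ≤ b i) (hdim : (Finset.univ.filter fun i => a i < b i).card = k)
    (hr : ∀ i, b i - a i ≤ r) :
    ((∏ i, (⌈c * (b i - a i) / (2 * δ)⌉₊ + 1) : ℕ) : ℝ) ≤ (c * r / (2 * δ) + 2) ^ k := by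
  have hfactor : ∀ i, (⌈c * (b i - a i) / (2 * δ)⌉₊ : ℝ) + 1 ≤
      if a i < b i then c * r / (2 * δ) + 2 else 1 := by
    intro i
    split_ifs with h
    · exact ceil_mul_sub_div_add_one_le hc hδ (hab i) (hr i)
    · simp [le_antisymm (hab i) (not_lt.1 h)]
  push_cast
  calc ∏ i, ((⌈c * (b i - a i) / (2 * δ)⌉₊ : ℝ) + 1)
      ≤ ∏ i, if a i < b i then c * r / (2 * δ) + 2 else 1 :=
        prod_le_prod (fun i _ => by positivity) fun i _ => hfactor i
    _ = (c * r / (2 * δ) + 2) ^ k := by rw [← prod_filter, prod_const, hdim]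

end boxMesh

lemma sqrt_mul_div_add_two_le_sqrt_add_one {x r δ : ℝ} (hx : 0 ≤ x) (hδ : 0 < δ)
    (hr : 8 * √(x + 1) * δ ≤ r) : √x * r / (2 * δ) + 2 ≤ √(x + 1) * r / (2 * δ) := by
  set s := √(x + 1)
  set t := √x
  have hst : s ^ 2 - t ^ 2 = 1 := by
    rw [Real.sq_sqrt (by linarith), Real.sq_sqrt hx]; ring
  have ht : 0 ≤ t := Real.sqrt_nonneg x
  have hts : t ≤ s := Real.sqrt_le_sqrt (by linarith)
  -- `(s - t) (s + t) = 1` with `s + t ≤ 2 s`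
  have hinv : 1 ≤ 2 * s * (s - t) := by
    nlinarith [mul_le_mul_of_nonneg_left hts (sub_nonneg.2 hts)]
  have hgap : 4 * δ ≤ (s - t) * r := by
    nlinarith [mul_le_mul_of_nonneg_left hr (sub_nonneg.2 hts)]
  rw [div_add' _ _ _ (by positivity), div_le_div_iff_of_pos_right (by positivity)]
  linarith

theorem stmt_13 (d k : ℕ) (hk : 1 ≤ k)
    (a b : Fin d → ℝ) (hab : ∀ i, a i ≤ b i)
    (hdim : (Finset.univ.filter fun i => a i < b i).card = k)
    (δ : ℝ) (hδ : 0 < δ) :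
    ∃ S : Finset (EuclideanSpace ℝ (Fin d)),
      IsNiceDeltaNet δ a b (S : Set (EuclideanSpace ℝ (Fin d))) ∧
      S.card = ∏ i, (⌈Real.sqrt k * (b i - a i) / (2 * δ)⌉₊ + 1) ∧
      (k = d - 1 →
        ∀ r : ℝ, (∀ i, b i - a i ≤ r) → 8 * Real.sqrt d * δ ≤ r →
          (S.card : ℝ) ≤ (Real.sqrt d * r / (2 * δ)) ^ (d - 1)) := by
  have hk' : 0 < √(k : ℝ) := Real.sqrt_pos.2 (Nat.cast_pos.2 hk)
  have hm : ∀ i, a i < b i → ⌈√k * (b i - a i) / (2 * δ)⌉₊ ≠ 0 :=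
    fun i => ceil_mul_sub_div_ne_zero hk' hδ
  have hm' : ∀ i, ⌈√k * (b i - a i) / (2 * δ)⌉₊ ≠ 0 → a i ≠ b i :=
    fun i hne heq => hne (by simp [heq])
  refine ⟨grid a b fun i => ⌈√k * (b i - a i) / (2 * δ)⌉₊,
    isNiceDeltaNet_grid hab hm (sqrt_sum_sq_sub_div_two_mul_ceil_le hk hab hdim hδ),
    card_grid hm', fun hkd r hr hrδ => ?_⟩
  have hd : (d : ℝ) = k + 1 := by norm_cast; omega
  rw [card_grid hm', ← hkd, hd]
  rw [hd] at hrδ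
  calc _ ≤ (√k * r / (2 * δ) + 2) ^ k := prod_ceil_mul_sub_div_add_one_le hk'.le hδ hab hdim hr
    _ ≤ (√(k + 1) * r / (2 * δ)) ^ k := by
      have hr0 : 0 ≤ r := le_trans (by positivity) hrδ
      gcongr
      exact sqrt_mul_div_add_two_le_sqrt_add_one (Nat.cast_nonneg k) hδ hrδ
end

section
/- Let f : ℝ^d → ℝ be continuously differentiable with L-Lipschitz gradient for some L > 0. Let E be a (d−1)-dimensional hyperrectangle in ℝ^d, let δ > 0 and let S be a nice δ-net of E. Let ε > 0 and let x ∈ ℝ^d with dist(x, E) > 0 (Euclidean distance from x to the set E). If every z ∈ S is ε-unreachable from x, then every y ∈ E is ε′-unreachable from x, where ε′ = ε + (δ²/(2·dist(x,E)))·(L + 2ε/dist(x,E)). -/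
/-!
Let `D = dist(x, E)` and `g w = f w + ε ‖x - w‖`. On `E` the gradient of `g` is
`(L + 2ε/D)`-Lipschitz, because `w ↦ (x - w)/‖x - w‖` is `2/D`-Lipschitz where `‖x - w‖ ≥ D`.
Let `p` minimise `g` on the box `E` and let `z ∈ S` be a net point of the smallest face through `p`
with `‖z - p‖ ≤ δ`. Since `p` lies in the relative interior of that face, `p - z` is a feasible
direction at `p`, so first-order optimality gives `⟪∇g p, z - p⟫ ≤ 0`, and the quadratic upper
bound yields `g z ≤ g p + (L + 2ε/D) δ² / 2`. Hence for `y ∈ E`,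
`f y + ε ‖x - y‖ ≥ g p > f x - (L + 2ε/D) δ² / 2 ≥ f x - δ²/(2D) (L + 2ε/D) ‖x - y‖`.
-/

open scoped RealInnerProductSpace
open Set Filter Topology NormedSpace

section NormedSpace

variable {V : Type*} [NormedAddCommGroup V] [NormedSpace ℝ V]

theorem norm_normalize_le (v : V) : ‖normalize v‖ ≤ 1 := by
  rcases eq_or_ne v 0 with rfl | hv
  · simp
  · exact (norm_normalize_eq_one_iff.2 hv).le

theorem norm_normalize_sub_normalize_le {u : V} (hu : u ≠ 0) (v : V) :
    ‖normalize u - normalize v‖ ≤ 2 * ‖u - v‖ / ‖u‖ := by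
  have hu' : 0 < ‖u‖ := norm_pos_iff.2 hu
  have key : ‖u‖ • (normalize u - normalize v) = (u - v) + (‖v‖ - ‖u‖) • normalize v := by
    rw [smul_sub, norm_smul_normalize, sub_smul, norm_smul_normalize]
    abel
  rw [le_div_iff₀ hu', mul_comm, ← Real.norm_of_nonneg hu'.le, ← norm_smul, key]
  calc ‖(u - v) + (‖v‖ - ‖u‖) • normalize v‖
      ≤ ‖u - v‖ + |‖v‖ - ‖u‖| * ‖normalize v‖ := by
        simpa [norm_smul] using norm_add_le (u - v) ((‖v‖ - ‖u‖) • normalize v)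
    _ ≤ ‖u - v‖ + ‖u - v‖ * 1 := by
        gcongr
        · rw [abs_sub_comm]; exact abs_norm_sub_norm_le u v
        · exact norm_normalize_le v
    _ = 2 * ‖u - v‖ := by ring

theorem norm_sub_smul_normalize_sub_le {g g' x u v : V} {L ε D : ℝ}
    (hg : ‖g - g'‖ ≤ L * ‖u - v‖) (hε : 0 ≤ ε) (hD : 0 < D) (hu : D ≤ ‖x - u‖) :
    ‖(g - ε • normalize (x - u)) - (g' - ε • normalize (x - v))‖ ≤ (L + 2 * ε / D) * ‖u - v‖ := by
  have hN : ‖normalize (x - u) - normalize (x - v)‖ ≤ 2 * ‖u - v‖ / D := by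
    refine (norm_normalize_sub_normalize_le (norm_pos_iff.1 (hD.trans_le hu)) (x - v)).trans ?_
    rw [sub_sub_sub_cancel_left, norm_sub_rev]
    gcongr
  calc ‖(g - ε • normalize (x - u)) - (g' - ε • normalize (x - v))‖
      = ‖(g - g') - ε • (normalize (x - u) - normalize (x - v))‖ := by congr 1; module
    _ ≤ ‖g - g'‖ + ε * ‖normalize (x - u) - normalize (x - v)‖ :=
        (norm_sub_le _ _).trans_eq (by rw [norm_smul, Real.norm_of_nonneg hε])
    _ ≤ L * ‖u - v‖ + ε * (2 * ‖u - v‖ / D) := by gcongr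
    _ = (L + 2 * ε / D) * ‖u - v‖ := by ring

end NormedSpace

section InnerProductSpace

variable {F : Type*} [NormedAddCommGroup F] [InnerProductSpace ℝ F] [CompleteSpace F]

theorem hasGradientAt_norm_sub {x w : F} (h : w ≠ x) :
    HasGradientAt (fun w => ‖x - w‖) (-normalize (x - w)) w := by
  have hne : ‖x - w‖ ≠ 0 := norm_ne_zero_iff.2 (sub_ne_zero.2 h.symm)
  have hsq := ((hasFDerivAt_id w).const_sub x).norm_sq.sqrt (pow_ne_zero 2 hne)
  simp only [Real.sqrt_sq (norm_nonneg _), id] at hsq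
  rw [hasGradientAt_iff_hasFDerivAt]
  refine hsq.congr_fderiv ?_
  ext v
  simp only [one_div, mul_inv_rev, map_sub, ContinuousLinearMap.comp_neg,
    ContinuousLinearMap.comp_id, neg_sub, smul_apply, sub_apply, coe_innerSL_apply, nsmul_eq_mul,
    Nat.cast_ofNat, smul_eq_mul, NormedSpace.normalize, map_neg, map_smul, neg_apply,
    InnerProductSpace.toDual_apply_apply]
  ring

theorem HasGradientAt.add_mul_norm_sub {f : F → ℝ} {f' x w : F}
    (hf : HasGradientAt f f' w) (hw : w ≠ x) (ε : ℝ) :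
    HasGradientAt (fun w => f w + ε * ‖x - w‖) (f' - ε • normalize (x - w)) w := by
  rw [hasGradientAt_iff_hasFDerivAt] at *
  have h := hf.add ((hasGradientAt_norm_sub hw).hasFDerivAt.const_mul ε)
  rw [← map_smul, ← map_add, smul_neg, ← sub_eq_add_neg] at h
  exact h

theorem HasGradientAt.hasDerivAt_comp_add_smul {g : F → ℝ} {g' x v : F} {t : ℝ}
    (hg : HasGradientAt g g' (x + t • v)) :
    HasDerivAt (fun s : ℝ => g (x + s • v)) ⟪g', v⟫ t := by
  have hline : HasDerivAt (fun s : ℝ => x + s • v) v t := by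
    simpa using ((hasDerivAt_id t).smul_const v).const_add x
  have h := hg.hasFDerivAt.comp_hasDerivAt t hline
  rw [InnerProductSpace.toDual_apply_apply] at h
  exact h

variable {s : Set F} {g : F → ℝ} {g' : F → F} {K : ℝ}

theorem Convex.le_add_inner_add_sq_of_gradient_lipschitz (hs : Convex ℝ s)
    (hg : ∀ w ∈ s, HasGradientAt g (g' w) w)
    (hK : ∀ u ∈ s, ∀ v ∈ s, ‖g' u - g' v‖ ≤ K * ‖u - v‖) {x y : F} (hx : x ∈ s) (hy : y ∈ s) :
    g y ≤ g x + ⟪g' x, y - x⟫ + K / 2 * ‖y - x‖ ^ 2 := by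
  set v := y - x
  set φ : ℝ → ℝ := fun t => g (x + t • v) - t * ⟪g' x, v⟫ - K / 2 * t ^ 2 * ‖v‖ ^ 2
  have hseg : ∀ t ∈ Icc (0 : ℝ) 1, x + t • v ∈ s := fun t ht => hs.add_smul_sub_mem hx hy ht
  have hφ' : ∀ t ∈ Icc (0 : ℝ) 1,
      HasDerivAt φ (⟪g' (x + t • v) - g' x, v⟫ - K * t * ‖v‖ ^ 2) t := by
    intro t ht
    have := (((hg _ (hseg t ht)).hasDerivAt_comp_add_smul.sub
      ((hasDerivAt_id t).mul_const ⟪g' x, v⟫)).sub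
      (((hasDerivAt_pow 2 t).const_mul (K / 2)).mul_const (‖v‖ ^ 2)))
    refine this.congr_deriv ?_
    simp only [inner_sub_left, one_mul, Nat.cast_ofNat, Nat.add_one_sub_one, pow_one]
    ring
  have hφ'_nonpos : ∀ t ∈ interior (Icc (0 : ℝ) 1),
      ⟪g' (x + t • v) - g' x, v⟫ - K * t * ‖v‖ ^ 2 ≤ 0 := by
    intro t ht
    rw [interior_Icc] at ht
    have hxt := hK _ (hseg t (Ioo_subset_Icc_self ht)) x hx
    rw [add_sub_cancel_left, norm_smul, Real.norm_of_nonneg ht.1.le] at hxt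
    refine sub_nonpos.2 ?_
    calc ⟪g' (x + t • v) - g' x, v⟫ ≤ ‖g' (x + t • v) - g' x‖ * ‖v‖ := real_inner_le_norm _ _
      _ ≤ K * (t * ‖v‖) * ‖v‖ := by gcongr
      _ = K * t * ‖v‖ ^ 2 := by ring
  have hanti : AntitoneOn φ (Icc 0 1) :=
    antitoneOn_of_hasDerivWithinAt_nonpos (convex_Icc 0 1)
      (fun t ht => (hφ' t ht).continuousAt.continuousWithinAt)
      (fun t ht => (hφ' t (interior_subset ht)).hasDerivWithinAt) hφ'_nonpos
  have h01 := hanti (left_mem_Icc.2 zero_le_one) (right_mem_Icc.2 zero_le_one) zero_le_one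
  simp only [φ, v, one_smul, add_sub_cancel, one_mul, one_pow, mul_one, zero_smul, add_zero,
    zero_mul, sub_zero, ne_eq, OfNat.ofNat_ne_zero, not_false_eq_true, zero_pow, mul_zero] at h01
  linarith

theorem IsMinOn.le_add_sq_of_gradient_lipschitz {p z : F} (hmin : IsMinOn g s p)
    (hs : Convex ℝ s) (hg : ∀ w ∈ s, HasGradientAt g (g' w) w)
    (hK : ∀ u ∈ s, ∀ v ∈ s, ‖g' u - g' v‖ ≤ K * ‖u - v‖) (hp : p ∈ s) (hz : z ∈ s)
    (hpz : p - z ∈ posTangentConeAt s p) :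
    g z ≤ g p + K / 2 * ‖z - p‖ ^ 2 := by
  have hfermat : 0 ≤ ⟪g' p, p - z⟫ :=
    hmin.localize.hasFDerivWithinAt_nonneg (hg p hp).hasFDerivAt.hasFDerivWithinAt hpz
  have hdescent := hs.le_add_inner_add_sq_of_gradient_lipschitz hg hK hp hz
  rw [← neg_sub p z, inner_neg_right, neg_sub] at hdescent
  linarith

end InnerProductSpace

section Box

variable {a b p z : ℝ}

def minimalFaceIcc (a b p : ℝ) : Set ℝ :=
  if p = a then {a} else if p = b then {b} else Icc a b

theorem minimalFaceIcc_cases (a b p : ℝ) :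
    minimalFaceIcc a b p = Icc a b ∨ minimalFaceIcc a b p = {a} ∨
      minimalFaceIcc a b p = {b} := by
  unfold minimalFaceIcc
  split_ifs <;> simp

theorem self_mem_minimalFaceIcc (hp : p ∈ Icc a b) : p ∈ minimalFaceIcc a b p := by
  unfold minimalFaceIcc
  split_ifs with ha hb
  exacts [ha, hb, hp]

theorem eventually_add_mul_sub_mem_Icc (hp : p ∈ Icc a b) (hz : z ∈ minimalFaceIcc a b p) :
    ∀ᶠ t in 𝓝 (0 : ℝ), p + t * (p - z) ∈ Icc a b := by
  unfold minimalFaceIcc at hz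
  split_ifs at hz with ha hb
  · have hzp : z = p := (mem_singleton_iff.1 hz).trans ha.symm
    exact Eventually.of_forall fun t => by simpa [hzp] using hp
  · have hzp : z = p := (mem_singleton_iff.1 hz).trans hb.symm
    exact Eventually.of_forall fun t => by simpa [hzp] using hp
  · have hpIoo : p ∈ Ioo a b := ⟨hp.1.lt_of_ne (Ne.symm ha), hp.2.lt_of_ne hb⟩
    have hcont : Tendsto (fun t : ℝ => p + t * (p - z)) (𝓝 0) (𝓝 p) := by
      have hc : Continuous fun t : ℝ => p + t * (p - z) := by fun_prop
      simpa using hc.tendsto 0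
    exact (hcont.eventually (isOpen_Ioo.mem_nhds hpIoo)).mono fun _ ht => Ioo_subset_Icc_self ht

variable {ι : Type*}

theorem isCompact_setOf_forall_mem_Icc (a b : ι → ℝ) :
    IsCompact {x : EuclideanSpace ℝ ι | ∀ i, x i ∈ Icc (a i) (b i)} := by
  have h : {x : EuclideanSpace ℝ ι | ∀ i, x i ∈ Icc (a i) (b i)}
      = EuclideanSpace.equiv ι ℝ ⁻¹' Icc a b := by
    ext; simp [Pi.le_def, forall_and]
  rw [h]
  exact (EuclideanSpace.equiv ι ℝ).toHomeomorph.isCompact_preimage.2 isCompact_Icc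

theorem convex_setOf_forall_mem_Icc (a b : ι → ℝ) :
    Convex ℝ {x : EuclideanSpace ℝ ι | ∀ i, x i ∈ Icc (a i) (b i)} := by
  intro u hu v hv s t hs ht hst i
  simpa using convex_Icc (a i) (b i) (hu i) (hv i) hs ht hst

def minimalFace {d : ℕ} (a b : Fin d → ℝ) (p : EuclideanSpace ℝ (Fin d)) :
    Set (EuclideanSpace ℝ (Fin d)) :=
  {w | ∀ i, w i ∈ minimalFaceIcc (a i) (b i) (p i)}

theorem isFace_minimalFace {d : ℕ} (a b : Fin d → ℝ) (p : EuclideanSpace ℝ (Fin d)) :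
    IsFace a b (minimalFace a b p) :=
  ⟨_, fun _ => minimalFaceIcc_cases _ _ _, rfl⟩

theorem IsNiceDeltaNet.exists_dist_le_sub_mem_posTangentConeAt {d : ℕ} {δ : ℝ}
    {a b : Fin d → ℝ} {S : Set (EuclideanSpace ℝ (Fin d))} (hS : IsNiceDeltaNet δ a b S)
    {p : EuclideanSpace ℝ (Fin d)} (hp : ∀ i, p i ∈ Icc (a i) (b i)) :
    ∃ z ∈ S, dist p z ≤ δ ∧
      p - z ∈ posTangentConeAt {x : EuclideanSpace ℝ (Fin d) | ∀ i, x i ∈ Icc (a i) (b i)} p := by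
  obtain ⟨z, ⟨hzS, hzF⟩, hpz⟩ :=
    (hS.2 _ (isFace_minimalFace a b p)).2 p fun i => self_mem_minimalFaceIcc (hp i)
  refine ⟨z, hzS, hpz, mem_posTangentConeAt_of_frequently_mem ?_⟩
  have h := eventually_all.2 fun i => eventually_add_mul_sub_mem_Icc (hp i) (hzF i)
  exact ((h.filter_mono nhdsWithin_le_nhds).mono fun t ht i => by simpa using ht i).frequently

end Box

theorem stmt_14_general (d : ℕ)
    (f : EuclideanSpace ℝ (Fin d) → ℝ) (L : ℝ) (hL : 0 < L)
    (hf : ContDiff ℝ 1 f)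
    (hlip : ∀ x y : EuclideanSpace ℝ (Fin d),
      ‖gradient f x - gradient f y‖ ≤ L * ‖x - y‖)
    (a b : Fin d → ℝ)
    (E : Set (EuclideanSpace ℝ (Fin d)))
    (hE : E = {x : EuclideanSpace ℝ (Fin d) | ∀ i, x i ∈ Set.Icc (a i) (b i)})
    (δ : ℝ)
    (S : Set (EuclideanSpace ℝ (Fin d))) (hS : IsNiceDeltaNet δ a b S)
    (ε : ℝ) (hε : 0 < ε)
    (x : EuclideanSpace ℝ (Fin d)) (hx : 0 < Metric.infDist x E)
    (hunreach : ∀ z ∈ S, f z > f x - ε * ‖x - z‖) :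
    ∀ y ∈ E, f y > f x -
      (ε + δ^2 / (2 * Metric.infDist x E) * (L + 2 * ε / Metric.infDist x E)) * ‖x - y‖ := by
  have hEne : E.Nonempty :=
    nonempty_iff_ne_empty.2 fun h => hx.ne' (by rw [h, Metric.infDist_empty])
  set D := Metric.infDist x E
  have hfar : ∀ w ∈ E, D ≤ ‖x - w‖ := fun w hw =>
    dist_eq_norm x w ▸ Metric.infDist_le_dist_of_mem hw
  have hgrad : ∀ w ∈ E, HasGradientAt (fun w => f w + ε * ‖x - w‖)
      (gradient f w - ε • normalize (x - w)) w := fun w hw =>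
    (hf.differentiable one_ne_zero w).hasGradientAt.add_mul_norm_sub
      (sub_ne_zero.1 (norm_pos_iff.1 (hx.trans_le (hfar w hw)))).symm ε
  subst hE
  obtain ⟨p, hpE, hpmin⟩ := (isCompact_setOf_forall_mem_Icc a b).exists_isMinOn hEne
    (HasGradientAt.continuousOn hgrad)
  obtain ⟨z, hzS, hpz, hcone⟩ := hS.exists_dist_le_sub_mem_posTangentConeAt hpE
  have hgz := hpmin.le_add_sq_of_gradient_lipschitz (convex_setOf_forall_mem_Icc a b) hgrad
    (fun u hu v _ => norm_sub_smul_normalize_sub_le (hlip u v) hε.le hx (hfar u hu))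
    hpE (hS.1 hzS) hcone
  intro y hy
  have hgp : f p + ε * ‖x - p‖ ≤ f y + ε * ‖x - y‖ := hpmin hy
  have hzp : ‖z - p‖ ≤ δ := by rwa [← dist_eq_norm, dist_comm]
  set K := L + 2 * ε / D
  have hKδ : K / 2 * ‖z - p‖ ^ 2 ≤ δ ^ 2 / (2 * D) * K * ‖x - y‖ :=
    calc K / 2 * ‖z - p‖ ^ 2 ≤ K / 2 * δ ^ 2 := by gcongr
      _ = δ ^ 2 / (2 * D) * K * D := by field_simp
      _ ≤ δ ^ 2 / (2 * D) * K * ‖x - y‖ := by gcongr; exact hfar y hy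
  linarith [hunreach z hzS]

theorem stmt_14 (d : ℕ) (hd : 1 ≤ d)
    (f : EuclideanSpace ℝ (Fin d) → ℝ) (L : ℝ) (hL : 0 < L)
    (hf : ContDiff ℝ 1 f)
    (hlip : ∀ x y : EuclideanSpace ℝ (Fin d),
      ‖gradient f x - gradient f y‖ ≤ L * ‖x - y‖)
    (a b : Fin d → ℝ) (hab : ∀ i, a i ≤ b i)
    (hdim : (Finset.univ.filter fun i => a i < b i).card = d - 1)
    (E : Set (EuclideanSpace ℝ (Fin d)))
    (hE : E = {x : EuclideanSpace ℝ (Fin d) | ∀ i, x i ∈ Set.Icc (a i) (b i)})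
    (δ : ℝ) (hδ : 0 < δ)
    (S : Set (EuclideanSpace ℝ (Fin d))) (hS : IsNiceDeltaNet δ a b S)
    (ε : ℝ) (hε : 0 < ε)
    (x : EuclideanSpace ℝ (Fin d)) (hx : 0 < Metric.infDist x E)
    (hunreach : ∀ z ∈ S, f z > f x - ε * ‖x - z‖) :
    ∀ y ∈ E, f y > f x -
      (ε + δ^2 / (2 * Metric.infDist x E) * (L + 2 * ε / Metric.infDist x E)) * ‖x - y‖ :=
  stmt_14_general d f L hL hf hlip a b E hE δ S hS ε hε x hx hunreach
end

section
/- For every fixed z ∈ ℝ^d with z ≠ 0, every index i ∈ {1, …, r}, and every t > 0, the probability (over the uniformly random permutation π) that |X^i(z) − X^{i+1}(z)| ≥ t is at most 4·exp(−t²·d₀/(64·‖z‖²)), where ‖z‖ is the Euclidean norm of z. -/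
open scoped Classical

/-- extend a function on `Fin n` to `ℕ` by zero. -/
noncomputable def fv (n : ℕ) (w : Fin n → ℝ) (m : ℕ) : ℝ :=
  if h : m < n then w ⟨m, h⟩ else 0

/-- swap the two blocks `[a, a+d₀)` and `[a+d₀, a+2d₀)` pairwise, at offsets in `S`. -/
def natSwap (a d₀ : ℕ) (S : Finset ℕ) (m : ℕ) : ℕ :=
  if a ≤ m ∧ m < a + d₀ ∧ (m - a) ∈ S then m + d₀
  else if a + d₀ ≤ m ∧ m < a + d₀ + d₀ ∧ (m - (a + d₀)) ∈ S then m - d₀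
  else m

lemma natSwap_lo {a d₀ j : ℕ} (S : Finset ℕ) (hj : j < d₀) :
    natSwap a d₀ S (a + j) = if j ∈ S then a + d₀ + j else a + j := by
  unfold natSwap
  have e : a + j - a = j := by omega
  by_cases hS : j ∈ S
  · rw [if_pos ⟨by omega, by omega, by rw [e]; exact hS⟩, if_pos hS]; omega
  · rw [if_neg (by rintro ⟨-, -, h⟩; rw [e] at h; exact hS h),
      if_neg (by rintro ⟨h, -, -⟩; omega), if_neg hS]

lemma natSwap_hi {a d₀ j : ℕ} (S : Finset ℕ) (hj : j < d₀) :
    natSwap a d₀ S (a + d₀ + j) = if j ∈ S then a + j else a + d₀ + j := by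
  unfold natSwap
  have e : a + d₀ + j - (a + d₀) = j := by omega
  by_cases hS : j ∈ S
  · rw [if_neg (by rintro ⟨-, h, -⟩; omega),
      if_pos ⟨by omega, by omega, by rw [e]; exact hS⟩, if_pos hS]; omega
  · rw [if_neg (by rintro ⟨-, h, -⟩; omega),
      if_neg (by rintro ⟨-, -, h⟩; rw [e] at h; exact hS h), if_neg hS]

lemma natSwap_invol (a d₀ : ℕ) (S : Finset ℕ) : Function.Involutive (natSwap a d₀ S) := by
  intro m
  by_cases hm1 : a ≤ m ∧ m < a + d₀
  · obtain ⟨j, hj, rfl⟩ : ∃ j, j < d₀ ∧ m = a + j := ⟨m - a, by omega, by omega⟩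
    rw [natSwap_lo S hj]
    by_cases hS : j ∈ S
    · rw [if_pos hS, natSwap_hi S hj, if_pos hS]
    · rw [if_neg hS, natSwap_lo S hj, if_neg hS]
  · by_cases hm2 : a + d₀ ≤ m ∧ m < a + d₀ + d₀
    · obtain ⟨j, hj, rfl⟩ : ∃ j, j < d₀ ∧ m = a + d₀ + j := ⟨m - (a + d₀), by omega, by omega⟩
      rw [natSwap_hi S hj]
      by_cases hS : j ∈ S
      · rw [if_pos hS, natSwap_lo S hj, if_pos hS]
      · rw [if_neg hS, natSwap_hi S hj, if_neg hS]
    · have hid : natSwap a d₀ S m = m := by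
        unfold natSwap
        rw [if_neg (by rintro ⟨h, h', -⟩; exact hm1 ⟨h, h'⟩),
          if_neg (by rintro ⟨h, h', -⟩; exact hm2 ⟨h, h'⟩)]
      rw [hid, hid]

lemma natSwap_lt {a d₀ n m : ℕ} (S : Finset ℕ) (hn : a + d₀ + d₀ ≤ n) (hm : m < n) :
    natSwap a d₀ S m < n := by
  unfold natSwap; split_ifs <;> omega

/-- the block-swap as a permutation of `Fin n`. -/
def permS (a d₀ : ℕ) (S : Finset ℕ) (n : ℕ) (hn : a + d₀ + d₀ ≤ n) : Equiv.Perm (Fin n) :=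
  Function.Involutive.toPerm (fun x => ⟨natSwap a d₀ S x.val, natSwap_lt S hn x.isLt⟩)
    (fun x => by ext; exact natSwap_invol a d₀ S x.val)

lemma permS_apply {a d₀ n : ℕ} (S : Finset ℕ) (hn : a + d₀ + d₀ ≤ n) (x : Fin n) :
    ((permS a d₀ S n hn) x : ℕ) = natSwap a d₀ S x.val := rfl

/-- rewrite a block sum over a filter as a sum over `range d₀`. -/
lemma sum_filter_block {n a d₀ : ℕ} (han : a + d₀ ≤ n) (w : Fin n → ℝ) :
    ∑ s ∈ Finset.univ.filter (fun s : Fin n => a ≤ (s : ℕ) ∧ (s : ℕ) < a + d₀), w s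
      = ∑ j ∈ Finset.range d₀, fv n w (a + j) := by
  rw [Finset.sum_filter]
  have h1 : ∀ s : Fin n, (if a ≤ (s : ℕ) ∧ (s : ℕ) < a + d₀ then w s else 0)
      = (fun m => if a ≤ m ∧ m < a + d₀ then fv n w m else 0) ((s : ℕ)) := by
    intro s; simp [fv, s.isLt]
  rw [Finset.sum_congr rfl (fun s _ => h1 s),
    Fin.sum_univ_eq_sum_range (fun m => if a ≤ m ∧ m < a + d₀ then fv n w m else 0),
    ← Finset.sum_filter]
  have hset : (Finset.range n).filter (fun m => a ≤ m ∧ m < a + d₀) = Finset.Ico a (a + d₀) := by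
    ext m; simp only [Finset.mem_filter, Finset.mem_range, Finset.mem_Ico]; omega
  rw [hset, Finset.sum_Ico_eq_sum_range]
  simp

/-- `X^i(z) - X^{i+1}(z)` numerator, for blocks starting at `a`. -/
noncomputable def blockDiff (n d₀ a : ℕ) (w : Fin n → ℝ) : ℝ :=
  ∑ j ∈ Finset.range d₀, (fv n w (a + j) - fv n w (a + d₀ + j))

lemma blockDiff_neg (n d₀ a : ℕ) (w : Fin n → ℝ) :
    blockDiff n d₀ a (fun s => -(w s)) = -blockDiff n d₀ a w := by
  unfold blockDiff
  rw [← Finset.sum_neg_distrib]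
  refine Finset.sum_congr rfl fun j _ => ?_
  unfold fv
  split_ifs <;> ring

lemma blockDiff_perm {n d₀ a : ℕ} (S : Finset ℕ) (hn : a + d₀ + d₀ ≤ n)
    (w : Fin n → ℝ) (π : Equiv.Perm (Fin n)) :
    blockDiff n d₀ a (fun s => w ((π * permS a d₀ S n hn) s))
      = ∑ j ∈ Finset.range d₀, (if j ∈ S then (-1 : ℝ) else 1) *
          (fv n (fun s => w (π s)) (a + j) - fv n (fun s => w (π s)) (a + d₀ + j)) := by
  unfold blockDiff
  refine Finset.sum_congr rfl fun j hj => ?_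
  rw [Finset.mem_range] at hj
  have hlo : a + j < n := by omega
  have hhi : a + d₀ + j < n := by omega
  have key : ∀ (m : ℕ) (hm : m < n),
      fv n (fun s => w ((π * permS a d₀ S n hn) s)) m
        = fv n (fun s => w (π s)) (natSwap a d₀ S m) := by
    intro m hm
    have h2 : natSwap a d₀ S m < n := natSwap_lt S hn hm
    rw [fv, dif_pos hm, fv, dif_pos h2]
    rfl
  rw [key _ hlo, key _ hhi, natSwap_lo S hj, natSwap_hi S hj]
  by_cases hS : j ∈ S
  · rw [if_pos hS, if_pos hS, if_pos hS]; ring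
  · rw [if_neg hS, if_neg hS, if_neg hS]; ring

lemma sum_powerset_exp (d₀ : ℕ) (c : ℕ → ℝ) :
    ∑ S ∈ (Finset.range d₀).powerset,
        Real.exp (∑ j ∈ Finset.range d₀, (if j ∈ S then -c j else c j))
      = ∏ j ∈ Finset.range d₀, (Real.exp (-c j) + Real.exp (c j)) := by
  rw [Finset.prod_add]
  refine Finset.sum_congr rfl fun S hS => ?_
  rw [Finset.mem_powerset] at hS
  rw [Real.exp_sum]
  simp only [apply_ite Real.exp]
  rw [Finset.prod_ite (fun j => Real.exp (-c j)) (fun j => Real.exp (c j))]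
  have e1 : (Finset.range d₀).filter (fun j => j ∈ S) = S := by
    rw [Finset.filter_mem_eq_inter, Finset.inter_eq_right.2 hS]
  have e2 : (Finset.range d₀).filter (fun j => j ∉ S) = Finset.range d₀ \ S := by
    ext m
    simp only [Finset.mem_filter, Finset.mem_sdiff]
    try tauto
  rw [e1, e2]

lemma prod_cosh_le (d₀ : ℕ) (c : ℕ → ℝ) :
    ∏ j ∈ Finset.range d₀, (Real.exp (-c j) + Real.exp (c j))
      ≤ 2 ^ d₀ * Real.exp (∑ j ∈ Finset.range d₀, (c j) ^ 2 / 2) := by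
  have h1 : ∀ j, Real.exp (-c j) + Real.exp (c j) ≤ 2 * Real.exp ((c j) ^ 2 / 2) := by
    intro j
    have := Real.cosh_le_exp_half_sq (c j)
    rw [Real.cosh_eq] at this
    linarith
  calc ∏ j ∈ Finset.range d₀, (Real.exp (-c j) + Real.exp (c j))
      ≤ ∏ j ∈ Finset.range d₀, 2 * Real.exp ((c j) ^ 2 / 2) := by
        refine Finset.prod_le_prod (fun j _ => by positivity) fun j _ => h1 j
    _ = 2 ^ d₀ * Real.exp (∑ j ∈ Finset.range d₀, (c j) ^ 2 / 2) := by
        rw [Finset.prod_mul_distrib, Finset.prod_const, Real.exp_sum, Finset.card_range]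

lemma sum_sq_pairs {n a d₀ : ℕ} (hn : a + d₀ + d₀ ≤ n) (w : Fin n → ℝ) :
    ∑ j ∈ Finset.range d₀, ((fv n w (a + j)) ^ 2 + (fv n w (a + d₀ + j)) ^ 2)
      ≤ ∑ s : Fin n, (w s) ^ 2 := by
  rw [Finset.sum_add_distrib]
  have h1 : ∑ j ∈ Finset.range d₀, (fv n w (a + j)) ^ 2
      = ∑ m ∈ Finset.Ico a (a + d₀), (fv n w m) ^ 2 := by
    rw [Finset.sum_Ico_eq_sum_range]; simp
  have h2 : ∑ j ∈ Finset.range d₀, (fv n w (a + d₀ + j)) ^ 2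
      = ∑ m ∈ Finset.Ico (a + d₀) (a + d₀ + d₀), (fv n w m) ^ 2 := by
    rw [Finset.sum_Ico_eq_sum_range]; simp
  rw [h1, h2, Finset.sum_Ico_consecutive _ (by omega : a ≤ a + d₀) (by omega : a + d₀ ≤ a + d₀ + d₀)]
  have h3 : ∑ s : Fin n, (w s) ^ 2 = ∑ m ∈ Finset.range n, (fv n w m) ^ 2 := by
    rw [Finset.sum_congr rfl fun (s : Fin n) _ =>
        (show (w s) ^ 2 = (fun m => (fv n w m) ^ 2) ((s : ℕ)) by simp [fv, s.isLt]),
      Fin.sum_univ_eq_sum_range (fun m => (fv n w m) ^ 2)]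
  rw [h3]
  refine Finset.sum_le_sum_of_subset_of_nonneg ?_ fun m _ _ => sq_nonneg _
  intro m hm
  rw [Finset.mem_Ico] at hm
  rw [Finset.mem_range]
  omega

lemma mgf_bound {n d₀ a : ℕ} (hd₀ : 1 ≤ d₀) (hn : a + d₀ + d₀ ≤ n) (w : Fin n → ℝ) (l : ℝ) :
    ∑ π : Equiv.Perm (Fin n),
        Real.exp (l * (blockDiff n d₀ a (fun s => w (π s)) / Real.sqrt d₀))
      ≤ (Fintype.card (Equiv.Perm (Fin n))) *
          Real.exp (l ^ 2 * (∑ s : Fin n, (w s) ^ 2) / d₀) := by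
  set V : ℝ := ∑ s : Fin n, (w s) ^ 2 with hV
  have hd₀R : (0 : ℝ) < d₀ := by exact_mod_cast hd₀
  set F : Equiv.Perm (Fin n) → ℝ :=
    fun π => blockDiff n d₀ a (fun s => w (π s)) / Real.sqrt d₀ with hF
  -- Step 1: for fixed π, the sum over S is bounded
  have key : ∀ π : Equiv.Perm (Fin n),
      ∑ S ∈ (Finset.range d₀).powerset, Real.exp (l * F (π * permS a d₀ S n hn))
        ≤ 2 ^ d₀ * Real.exp (l ^ 2 * V / d₀) := by
    intro π
    set W : ℕ → ℝ := fv n (fun s => w (π s)) with hW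
    set D : ℕ → ℝ := fun j => W (a + j) - W (a + d₀ + j) with hD
    set c : ℕ → ℝ := fun j => l / Real.sqrt d₀ * D j with hc
    have hFc : ∀ S ∈ (Finset.range d₀).powerset,
        l * F (π * permS a d₀ S n hn) = ∑ j ∈ Finset.range d₀,
          (if j ∈ S then -c j else c j) := by
      intro S _
      rw [hF]
      simp only
      rw [blockDiff_perm S hn w π, Finset.sum_div, Finset.mul_sum]
      refine Finset.sum_congr rfl fun j _ => ?_
      rw [hc]
      simp only
      rw [hD, hW]
      split_ifs <;> ring
    rw [Finset.sum_congr rfl fun S hS => congrArg Real.exp (hFc S hS), sum_powerset_exp]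
    refine le_trans (prod_cosh_le d₀ c) ?_
    have hsum : ∑ j ∈ Finset.range d₀, (c j) ^ 2 / 2 ≤ l ^ 2 * V / d₀ := by
      have hcsq : ∀ j, (c j) ^ 2 / 2 = l ^ 2 / d₀ * ((D j) ^ 2 / 2) := by
        intro j
        rw [hc]
        simp only
        rw [mul_pow, div_pow, Real.sq_sqrt (le_of_lt hd₀R)]
        ring
      rw [Finset.sum_congr rfl fun j _ => hcsq j, ← Finset.mul_sum]
      have hDsq : ∑ j ∈ Finset.range d₀, (D j) ^ 2 / 2
          ≤ ∑ j ∈ Finset.range d₀, ((W (a + j)) ^ 2 + (W (a + d₀ + j)) ^ 2) := by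
        refine Finset.sum_le_sum fun j _ => ?_
        rw [hD]; simp only; nlinarith [sq_nonneg (W (a + j) + W (a + d₀ + j))]
      have hpair := sum_sq_pairs hn (fun s => w (π s))
      have hperm : ∑ s : Fin n, (w (π s)) ^ 2 = V := by
        rw [hV]
        exact Equiv.sum_comp π (fun s => (w s) ^ 2)
      have hnn : ∑ j ∈ Finset.range d₀, (D j) ^ 2 / 2 ≤ V := by
        calc _ ≤ _ := hDsq
          _ ≤ ∑ s : Fin n, (w (π s)) ^ 2 := hpair
          _ = V := hperm
      calc l ^ 2 / d₀ * (∑ j ∈ Finset.range d₀, (D j) ^ 2 / 2)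
          ≤ l ^ 2 / d₀ * V := by
            refine mul_le_mul_of_nonneg_left hnn (by positivity)
        _ = l ^ 2 * V / d₀ := by ring
    exact mul_le_mul_of_nonneg_left (Real.exp_le_exp.2 hsum) (by positivity)
  -- Step 2: reindexing
  have reindex : ∀ S : Finset ℕ,
      ∑ π : Equiv.Perm (Fin n), Real.exp (l * F (π * permS a d₀ S n hn))
        = ∑ π : Equiv.Perm (Fin n), Real.exp (l * F π) :=
    fun S => Fintype.sum_equiv (Equiv.mulRight (permS a d₀ S n hn))
      (fun π => Real.exp (l * F (π * permS a d₀ S n hn)))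
      (fun π => Real.exp (l * F π)) (fun π => rfl)
  have main : (2 : ℝ) ^ d₀ * ∑ π : Equiv.Perm (Fin n), Real.exp (l * F π)
      ≤ 2 ^ d₀ * ((Fintype.card (Equiv.Perm (Fin n))) * Real.exp (l ^ 2 * V / d₀)) := by
    have e1 : (2 : ℝ) ^ d₀ * ∑ π : Equiv.Perm (Fin n), Real.exp (l * F π)
        = ∑ S ∈ (Finset.range d₀).powerset,
            ∑ π : Equiv.Perm (Fin n), Real.exp (l * F (π * permS a d₀ S n hn)) := by
      rw [Finset.sum_congr rfl fun S _ => reindex S, Finset.sum_const,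
        Finset.card_powerset, Finset.card_range, nsmul_eq_mul]
      push_cast
      ring
    rw [e1, Finset.sum_comm]
    calc ∑ π : Equiv.Perm (Fin n), ∑ S ∈ (Finset.range d₀).powerset,
            Real.exp (l * F (π * permS a d₀ S n hn))
        ≤ ∑ _π : Equiv.Perm (Fin n), 2 ^ d₀ * Real.exp (l ^ 2 * V / d₀) :=
          Finset.sum_le_sum fun π _ => key π
      _ = 2 ^ d₀ * ((Fintype.card (Equiv.Perm (Fin n))) * Real.exp (l ^ 2 * V / d₀)) := by
          rw [Finset.sum_const, nsmul_eq_mul, Finset.card_univ]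
          ring
  have h2 : (0 : ℝ) < 2 ^ d₀ := by positivity
  exact le_of_mul_le_mul_left main h2

lemma one_sided {n d₀ a : ℕ} (hd₀ : 1 ≤ d₀) (hn : a + d₀ + d₀ ≤ n) (w : Fin n → ℝ)
    (hw : 0 < ∑ s : Fin n, (w s) ^ 2) {t : ℝ} (ht : 0 < t) :
    ((Finset.univ.filter (fun π : Equiv.Perm (Fin n) =>
        t ≤ blockDiff n d₀ a (fun s => w (π s)) / Real.sqrt d₀)).card : ℝ)
      ≤ (Fintype.card (Equiv.Perm (Fin n))) *
          Real.exp (-t ^ 2 * d₀ / (4 * ∑ s : Fin n, (w s) ^ 2)) := by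
  set V : ℝ := ∑ s : Fin n, (w s) ^ 2 with hV
  have hd₀R : (0 : ℝ) < d₀ := by exact_mod_cast hd₀
  set F : Equiv.Perm (Fin n) → ℝ :=
    fun π => blockDiff n d₀ a (fun s => w (π s)) / Real.sqrt d₀ with hF
  set l : ℝ := t * d₀ / (2 * V) with hl
  have hlpos : 0 < l := by positivity
  set E := Finset.univ.filter (fun π : Equiv.Perm (Fin n) => t ≤ F π) with hE
  have step1 : (E.card : ℝ) ≤ ∑ π ∈ E, Real.exp (l * F π + -(l * t)) := by
    have h1 : ∀ π ∈ E, (1 : ℝ) ≤ Real.exp (l * F π + -(l * t)) := by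
      intro π hπ
      rw [hE, Finset.mem_filter] at hπ
      have : 0 ≤ l * F π + -(l * t) := by nlinarith [hπ.2]
      exact Real.one_le_exp this
    calc (E.card : ℝ) = ∑ _π ∈ E, (1 : ℝ) := by
          rw [Finset.sum_const, nsmul_eq_mul, mul_one]
      _ ≤ _ := Finset.sum_le_sum h1
  have step2 : ∑ π ∈ E, Real.exp (l * F π + -(l * t))
      ≤ ∑ π : Equiv.Perm (Fin n), Real.exp (l * F π + -(l * t)) :=
    Finset.sum_le_sum_of_subset_of_nonneg (Finset.filter_subset _ _)
      (fun π _ _ => (Real.exp_pos _).le)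
  have step3 : ∑ π : Equiv.Perm (Fin n), Real.exp (l * F π + -(l * t))
      = (∑ π : Equiv.Perm (Fin n), Real.exp (l * F π)) * Real.exp (-(l * t)) := by
    rw [Finset.sum_mul]
    exact Finset.sum_congr rfl fun π _ => Real.exp_add _ _
  have step4 : (∑ π : Equiv.Perm (Fin n), Real.exp (l * F π)) * Real.exp (-(l * t))
      ≤ ((Fintype.card (Equiv.Perm (Fin n))) * Real.exp (l ^ 2 * V / d₀)) *
          Real.exp (-(l * t)) :=
    mul_le_mul_of_nonneg_right (mgf_bound hd₀ hn w l) (Real.exp_pos _).le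
  have hexp : l ^ 2 * V / d₀ + -(l * t) = -t ^ 2 * d₀ / (4 * V) := by
    rw [hl]
    field_simp
    ring
  calc (E.card : ℝ) ≤ (∑ π : Equiv.Perm (Fin n), Real.exp (l * F π)) * Real.exp (-(l * t)) :=
        le_trans step1 (le_trans step2 (le_of_eq step3))
    _ ≤ ((Fintype.card (Equiv.Perm (Fin n))) * Real.exp (l ^ 2 * V / d₀)) *
          Real.exp (-(l * t)) := step4
    _ = (Fintype.card (Equiv.Perm (Fin n))) * Real.exp (-t ^ 2 * d₀ / (4 * V)) := by
        rw [mul_assoc, ← Real.exp_add, hexp]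

/-- For a permutation `π` of `Fin ((r+2)*d₀)`, the random part
`P_i = π({(i-1)·d₀ + 1, …, i·d₀})` (written with `0`-based positions), and
`X^i(z) = (∑_{s ∈ P_i} z_s)/√d₀`. -/
noncomputable def Xperm (d₀ r : ℕ) (π : Equiv.Perm (Fin ((r + 2) * d₀))) (i : ℕ)
    (z : EuclideanSpace ℝ (Fin ((r + 2) * d₀))) : ℝ :=
  (∑ s ∈ Finset.univ.filter
      (fun s : Fin ((r + 2) * d₀) => (i - 1) * d₀ ≤ (s : ℕ) ∧ (s : ℕ) < i * d₀),
    z (π s)) / Real.sqrt d₀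

theorem stmt_18 (d₀ r : ℕ) (hd₀ : 1 ≤ d₀) (hr : 1 ≤ r)
    (z : EuclideanSpace ℝ (Fin ((r + 2) * d₀))) (hz : z ≠ 0)
    (i : ℕ) (hi : i ∈ Finset.Icc 1 r) (t : ℝ) (ht : 0 < t) :
    ((Finset.univ.filter (fun π : Equiv.Perm (Fin ((r + 2) * d₀)) =>
        t ≤ |Xperm d₀ r π i z - Xperm d₀ r π (i + 1) z|)).card : ℝ) /
      (Fintype.card (Equiv.Perm (Fin ((r + 2) * d₀))) : ℝ) ≤
    4 * Real.exp (-t^2 * (d₀ : ℝ) / (64 * ‖z‖^2)) := by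
  rw [Finset.mem_Icc] at hi
  obtain ⟨k, rfl⟩ : ∃ k, i = k + 1 := ⟨i - 1, by omega⟩
  set a : ℕ := k * d₀ with ha
  have hkr : k + 1 ≤ r := by omega
  have hn : a + d₀ + d₀ ≤ (r + 2) * d₀ := by
    have h : (k + 2) * d₀ ≤ (r + 2) * d₀ := Nat.mul_le_mul_right d₀ (by omega)
    calc a + d₀ + d₀ = (k + 2) * d₀ := by ring
      _ ≤ (r + 2) * d₀ := h
  have hd₀R : (0 : ℝ) < d₀ := by exact_mod_cast hd₀
  set w : Fin ((r + 2) * d₀) → ℝ := fun s => z s with hw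
  set V : ℝ := ∑ s : Fin ((r + 2) * d₀), (w s) ^ 2 with hV
  have hVnorm : V = ‖z‖ ^ 2 := by
    rw [EuclideanSpace.norm_eq, Real.sq_sqrt (by positivity)]
    refine Finset.sum_congr rfl fun s _ => ?_
    rw [Real.norm_eq_abs, sq_abs]
  have hVpos : 0 < V := by
    rw [hVnorm]
    have : 0 < ‖z‖ := norm_pos_iff.2 hz
    positivity
  set F : Equiv.Perm (Fin ((r + 2) * d₀)) → ℝ :=
    fun π => blockDiff ((r + 2) * d₀) d₀ a (fun s => w (π s)) / Real.sqrt d₀ with hF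
  -- identify Xperm difference with blockDiff
  have hrw : ∀ π : Equiv.Perm (Fin ((r + 2) * d₀)),
      Xperm d₀ r π (k + 1) z - Xperm d₀ r π (k + 1 + 1) z = F π := by
    intro π
    unfold Xperm
    rw [hF]
    simp only
    rw [← sub_div]
    congr 1
    have e1 : (k + 1 - 1) * d₀ = a := by simp [ha]
    have e2 : (k + 1) * d₀ = a + d₀ := by rw [ha]; ring
    have e3 : (k + 1 + 1 - 1) * d₀ = a + d₀ := by
      rw [ha]; simp only [Nat.add_sub_cancel]; ring
    have e4 : (k + 1 + 1) * d₀ = a + d₀ + d₀ := by rw [ha]; ring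
    simp only [e1, e2, e3, e4]
    rw [sum_filter_block (by omega) (fun s => z (π s)),
      sum_filter_block (by omega) (fun s => z (π s)),
      blockDiff, ← Finset.sum_sub_distrib]
  have hcard : (0 : ℝ) < (Fintype.card (Equiv.Perm (Fin ((r + 2) * d₀))) : ℝ) := by
    exact_mod_cast Fintype.card_pos
  set N : ℝ := (Fintype.card (Equiv.Perm (Fin ((r + 2) * d₀))) : ℝ) with hN
  set E := Finset.univ.filter (fun π : Equiv.Perm (Fin ((r + 2) * d₀)) =>
    t ≤ |Xperm d₀ r π (k + 1) z - Xperm d₀ r π (k + 1 + 1) z|) with hE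
  set E1 := Finset.univ.filter (fun π : Equiv.Perm (Fin ((r + 2) * d₀)) => t ≤ F π) with hE1
  set w' : Fin ((r + 2) * d₀) → ℝ := fun s => -(w s) with hw'
  set E2 := Finset.univ.filter (fun π : Equiv.Perm (Fin ((r + 2) * d₀)) =>
    t ≤ blockDiff ((r + 2) * d₀) d₀ a (fun s => w' (π s)) / Real.sqrt d₀) with hE2
  have hneg : ∀ π : Equiv.Perm (Fin ((r + 2) * d₀)),
      blockDiff ((r + 2) * d₀) d₀ a (fun s => w' (π s)) / Real.sqrt d₀ = -(F π) := by
    intro π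
    rw [hF]
    simp only
    rw [← neg_div]
    congr 1
    exact blockDiff_neg ((r + 2) * d₀) d₀ a (fun s => w (π s))
  have hsub : E ⊆ E1 ∪ E2 := by
    intro π hπ
    rw [hE, Finset.mem_filter] at hπ
    rw [hrw π] at hπ
    rw [Finset.mem_union, hE1, hE2, Finset.mem_filter, Finset.mem_filter, hneg π]
    rcases le_abs.1 hπ.2 with h | h
    · exact Or.inl ⟨Finset.mem_univ _, h⟩
    · exact Or.inr ⟨Finset.mem_univ _, h⟩
  have hb1 : (E1.card : ℝ) ≤ N * Real.exp (-t ^ 2 * d₀ / (4 * V)) :=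
    one_sided hd₀ hn w hVpos ht
  have hb2 : (E2.card : ℝ) ≤ N * Real.exp (-t ^ 2 * d₀ / (4 * V)) := by
    have hVw' : (∑ s : Fin ((r + 2) * d₀), (w' s) ^ 2) = V := by
      rw [hV]
      exact Finset.sum_congr rfl fun s _ => by rw [hw']; ring
    have h := one_sided hd₀ hn w' (by rw [hVw']; exact hVpos) ht
    rw [hVw'] at h
    exact h
  have hEcard : (E.card : ℝ) ≤ (E1.card : ℝ) + (E2.card : ℝ) := by
    have h1 : E.card ≤ (E1 ∪ E2).card := Finset.card_le_card hsub
    have h2 : (E1 ∪ E2).card ≤ E1.card + E2.card := Finset.card_union_le _ _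
    exact_mod_cast le_trans h1 h2
  have hexp : Real.exp (-t ^ 2 * d₀ / (4 * V))
      ≤ Real.exp (-t ^ 2 * (d₀ : ℝ) / (64 * ‖z‖ ^ 2)) := by
    rw [← hVnorm]
    refine Real.exp_le_exp.2 ?_
    rw [div_le_div_iff₀ (by positivity) (by positivity)]
    nlinarith [mul_nonneg (mul_nonneg (sq_nonneg t) hd₀R.le) hVpos.le]
  rw [div_le_iff₀ hcard]
  have h2 : (0 : ℝ) < Real.exp (-t ^ 2 * (d₀ : ℝ) / (64 * ‖z‖ ^ 2)) := Real.exp_pos _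
  calc (E.card : ℝ) ≤ (E1.card : ℝ) + (E2.card : ℝ) := hEcard
    _ ≤ 2 * (N * Real.exp (-t ^ 2 * d₀ / (4 * V))) := by linarith
    _ ≤ 4 * Real.exp (-t ^ 2 * (d₀ : ℝ) / (64 * ‖z‖ ^ 2)) * N := by
        nlinarith [mul_le_mul_of_nonneg_left hexp hcard.le, mul_pos hcard h2]
end
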